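/- arXiv:2405.20487 — 14 statements merged into one kernel-verified Lean document; each statement's English description precedes it below -/
import Mathlib

section
/- Relation between PNS, PN and PS for a binary treatment (Lemma 'If X is binary'): Let (Ω, μ) be a probability space, Y₀, Y₁ : Ω → ℝ measurable maps (the potential outcomes under the two treatment values x₀ and x₁), X : Ω → Bool measurable (X ω = true encodes receiving treatment x₁, X ω = false encodes x₀), and let the observed outcome be Y := fun ω => if X ω then Y₁ ω else Y₀ ω (consistency). Fix y ∈ ℝ and assume μ {ω | y ≤ Y ω ∧ X ω = true} > 0 and μ {ω | Y ω < y ∧ X ω = false} > 0. Then μ.real {ω | Y₀ ω < y ∧ y ≤ Y₁ ω} = (μ.real {ω | Y₀ ω < y ∧ y ≤ Y ω ∧ X ω = true} / μ.real {ω | y ≤ Y ω ∧ X ω = true}) · μ.real {ω | y ≤ Y ω ∧ X ω = true} + (μ.real {ω | y ≤ Y₁ ω ∧ Y ω < y ∧ X ω = false} / μ.real {ω | Y ω < y ∧ X ω = false}) · μ.real {ω | Y ω < y ∧ X ω = false}; that is, PNS(y;x₀,x₁) = PN(y;x₀,x₁)·P(y ≤ Y, X = x₁) + PS(y;x₀,x₁)·P(Y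 < y, X = x₀). -/
open MeasureTheory

/-- Relation between PNS, PN and PS for a binary treatment:
`PNS(y;x₀,x₁) = PN(y;x₀,x₁)·P(y ≤ Y, X = x₁) + PS(y;x₀,x₁)·P(Y < y, X = x₀)`. -/
theorem pns_eq_pn_mul_add_ps_mul_of_binary_treatment
    {Ω : Type*} [MeasurableSpace Ω] (μ : Measure Ω) [IsProbabilityMeasure μ]
    (Y₀ Y₁ : Ω → ℝ) (hY₀ : Measurable Y₀) (hY₁ : Measurable Y₁)
    (X : Ω → Bool) (hX : Measurable X)
    (Y : Ω → ℝ) (hY : Y = fun ω => if X ω then Y₁ ω else Y₀ ω)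
    (y : ℝ)
    (h₁ : 0 < μ {ω | y ≤ Y ω ∧ X ω = true})
    (h₀ : 0 < μ {ω | Y ω < y ∧ X ω = false}) :
    (μ {ω | Y₀ ω < y ∧ y ≤ Y₁ ω}).toReal =
      ((μ {ω | Y₀ ω < y ∧ y ≤ Y ω ∧ X ω = true}).toReal
          / (μ {ω | y ≤ Y ω ∧ X ω = true}).toReal)
        * (μ {ω | y ≤ Y ω ∧ X ω = true}).toReal
      + ((μ {ω | y ≤ Y₁ ω ∧ Y ω < y ∧ X ω = false}).toReal
          / (μ {ω | Y ω < y ∧ X ω = false}).toReal)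
        * (μ {ω | Y ω < y ∧ X ω = false}).toReal := by
  have hne1 : (μ {ω | y ≤ Y ω ∧ X ω = true}).toReal ≠ 0 := by
    have := (ENNReal.toReal_pos h₁.ne' (measure_ne_top μ _))
    exact this.ne'
  have hne0 : (μ {ω | Y ω < y ∧ X ω = false}).toReal ≠ 0 := by
    have := (ENNReal.toReal_pos h₀.ne' (measure_ne_top μ _))
    exact this.ne'
  rw [div_mul_cancel₀ _ hne1, div_mul_cancel₀ _ hne0]
  have hA₁ : {ω | Y₀ ω < y ∧ y ≤ Y ω ∧ X ω = true}
      = {ω | (Y₀ ω < y ∧ y ≤ Y₁ ω) ∧ X ω = true} := by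
    ext ω; subst hY; cases hb : X ω <;> simp [Set.mem_setOf_eq, hb, and_assoc]
  have hA₀ : {ω | y ≤ Y₁ ω ∧ Y ω < y ∧ X ω = false}
      = {ω | (Y₀ ω < y ∧ y ≤ Y₁ ω) ∧ X ω = false} := by
    ext ω; subst hY; cases hb : X ω <;> simp [Set.mem_setOf_eq, hb, and_comm]
  rw [hA₁, hA₀]
  have hU : {ω | Y₀ ω < y ∧ y ≤ Y₁ ω}
      = {ω | (Y₀ ω < y ∧ y ≤ Y₁ ω) ∧ X ω = true}
        ∪ {ω | (Y₀ ω < y ∧ y ≤ Y₁ ω) ∧ X ω = false} := by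
    ext ω; simp only [Set.mem_setOf_eq, Set.mem_union]
    constructor
    · intro h; cases hb : X ω
      · exact Or.inr ⟨h, rfl⟩
      · exact Or.inl ⟨h, rfl⟩
    · rintro (⟨h, _⟩ | ⟨h, _⟩) <;> exact h
  rw [hU, measure_union, ENNReal.toReal_add (measure_ne_top μ _) (measure_ne_top μ _)]
  · intro s hs1 hs2 ω hω
    have h1 := hs1 hω; have h2 := hs2 hω
    simp only [Set.mem_setOf_eq] at h1 h2
    rw [h1.2] at h2; exact absurd h2.2 (by simp)
  · exact (((measurableSet_lt hY₀ measurable_const).inter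
      (measurableSet_le measurable_const hY₁)).inter (hX (measurableSet_singleton false)))
end

section
/- Monotonicity of the structural function implies monotonicity over potential outcomes (one direction of the paper's theorem relating the monotonicity assumptions, scalar case): Assume almost-sure monotonicity of the structural function over U, i.e. there is a Borel set S ⊆ ℝ with ν Sᶜ = 0 such that either f x is monotone increasing on S for every x ∈ 𝒳, or f x is monotone decreasing on S for every x ∈ 𝒳. Then monotonicity over potential outcomes holds: for all x₀, x₁ ∈ 𝒳 and all y ∈ ℝ, ν {u | f x₀ u < y ∧ y ≤ f x₁ u} = 0 or ν {u | f x₁ u < y ∧ y ≤ f x₀ u} = 0. -/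
open MeasureTheory

/-!
Off a null set the potential outcomes are comonotone functions of `u`, and two comonotone
functions cannot cross a level `y` in both directions: if `f x₀ u < y ≤ f x₁ u` and
`f x₁ v < y ≤ f x₀ v` with `u, v ∈ S`, then each ordering of `u` and `v` contradicts the
monotonicity of one of `f x₀`, `f x₁`.
-/

section Crossing

variable {α β : Type*} [LinearOrder α] [Preorder β] {g h : α → β} {S : Set α}

theorem MonotoneOn.disjoint_lt_le_or_disjoint_lt_le (hg : MonotoneOn g S) (hh : MonotoneOn h S)
    (y : β) :
    Disjoint {u | g u < y ∧ y ≤ h u} S ∨ Disjoint {u | h u < y ∧ y ≤ g u} S := by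
  simp only [Set.disjoint_iff_inter_eq_empty, ← Set.not_nonempty_iff_eq_empty]
  by_contra! ⟨⟨u, ⟨hgu, hhu⟩, huS⟩, ⟨v, ⟨hhv, hgv⟩, hvS⟩⟩
  rcases le_total u v with huv | hvu
  · exact (((hh huS hvS huv).trans_lt hhv).trans_le hhu).false
  · exact (((hg hvS huS hvu).trans_lt hgu).trans_le hgv).false

theorem AntitoneOn.disjoint_lt_le_or_disjoint_lt_le (hg : AntitoneOn g S) (hh : AntitoneOn h S)
    (y : β) :
    Disjoint {u | g u < y ∧ y ≤ h u} S ∨ Disjoint {u | h u < y ∧ y ≤ g u} S :=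
  hg.dual_left.disjoint_lt_le_or_disjoint_lt_le hh.dual_left y

end Crossing

theorem monotonicity_over_structural_function_implies_monotonicity_over_potential_outcomes_general
    {𝒳 : Type*} (ν : Measure ℝ)
    (f : 𝒳 → ℝ → ℝ)
    (hmono : ∃ S : Set ℝ, MeasurableSet S ∧ ν Sᶜ = 0 ∧
      ((∀ x, MonotoneOn (f x) S) ∨ (∀ x, AntitoneOn (f x) S))) :
    ∀ (x₀ x₁ : 𝒳) (y : ℝ),
      ν {u | f x₀ u < y ∧ y ≤ f x₁ u} = 0 ∨ ν {u | f x₁ u < y ∧ y ≤ f x₀ u} = 0 := by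
  obtain ⟨S, -, hνS, hcase⟩ := hmono
  intro x₀ x₁ y
  have null_of_disjoint (T : Set ℝ) (hT : Disjoint T S) : ν T = 0 :=
    measure_mono_null hT.subset_compl_right hνS
  have hdisj : Disjoint {u | f x₀ u < y ∧ y ≤ f x₁ u} S ∨
      Disjoint {u | f x₁ u < y ∧ y ≤ f x₀ u} S := by
    rcases hcase with hm | ha
    · exact (hm x₀).disjoint_lt_le_or_disjoint_lt_le (hm x₁) y
    · exact (ha x₀).disjoint_lt_le_or_disjoint_lt_le (ha x₁) y
  exact hdisj.imp (null_of_disjoint _) (null_of_disjoint _)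

/-- Almost-sure monotonicity of the structural function `f_Y(x, ·)` over `U`
implies monotonicity over the potential outcomes (scalar case). -/
theorem monotonicity_over_structural_function_implies_monotonicity_over_potential_outcomes
    {𝒳 : Type*} (ν : Measure ℝ) [IsProbabilityMeasure ν]
    (f : 𝒳 → ℝ → ℝ) (hf : ∀ x, Measurable (f x))
    (hmono : ∃ S : Set ℝ, MeasurableSet S ∧ ν Sᶜ = 0 ∧
      ((∀ x, MonotoneOn (f x) S) ∨ (∀ x, AntitoneOn (f x) S))) :
    ∀ (x₀ x₁ : 𝒳) (y : ℝ),
      ν {u | f x₀ u < y ∧ y ≤ f x₁ u} = 0 ∨ ν {u | f x₁ u < y ∧ y ≤ f x₀ u} = 0 :=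
  monotonicity_over_structural_function_implies_monotonicity_over_potential_outcomes_general ν f
    hmono
end

section
/- Identification of PNS (Theorem 'Identification of PoC', PNS part): In the scalar potential-outcomes model, assume exogeneity (U and X are independent under μ), assume monotonicity over potential outcomes at (x₀, x₁, y), and assume μ {ω | X ω = x₀} > 0 and μ {ω | X ω = x₁} > 0. Then the probability of necessity and sufficiency PNS(y;x₀,x₁) := μ.real {ω | f x₀ (U ω) < y ∧ y ≤ f x₁ (U ω)} is identified from observational conditional CDFs: PNS(y;x₀,x₁) = max (ρ(y;x₀) − ρ(y;x₁)) 0. -/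
open MeasureTheory ProbabilityTheory

/-- Identification of PNS: under exogeneity and monotonicity over potential outcomes,
`PNS(y;x₀,x₁) = max (ρ(y;x₀) − ρ(y;x₁)) 0`. -/
theorem identification_of_PNS
    {Ω 𝒳 : Type*} [MeasurableSpace Ω] [MeasurableSpace 𝒳] [MeasurableSingletonClass 𝒳]
    (μ : Measure Ω) [IsProbabilityMeasure μ]
    (U : Ω → ℝ) (hU : Measurable U) (X : Ω → 𝒳) (hX : Measurable X)
    (f : 𝒳 → ℝ → ℝ) (hf : ∀ x, Measurable (f x))
    (hexo : IndepFun U X μ)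
    (x₀ x₁ : 𝒳) (y : ℝ)
    (hmono : μ {ω | f x₀ (U ω) < y ∧ y ≤ f x₁ (U ω)} = 0 ∨
             μ {ω | f x₁ (U ω) < y ∧ y ≤ f x₀ (U ω)} = 0)
    (h₀ : 0 < μ {ω | X ω = x₀}) (h₁ : 0 < μ {ω | X ω = x₁})
    (ρ : ℝ → 𝒳 → ℝ)
    (hρ : ∀ (y' : ℝ) (x : 𝒳), ρ y' x =
      (μ {ω | f (X ω) (U ω) < y' ∧ X ω = x}).toReal / (μ {ω | X ω = x}).toReal) :
    (μ {ω | f x₀ (U ω) < y ∧ y ≤ f x₁ (U ω)}).toReal = max (ρ y x₀ - ρ y x₁) 0 := by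
  classical
  set A := U ⁻¹' ((f x₀) ⁻¹' Set.Iio y) with hA
  set B := U ⁻¹' ((f x₁) ⁻¹' Set.Iio y) with hB
  have hAm : MeasurableSet A := hU ((hf x₀) measurableSet_Iio)
  have hBm : MeasurableSet B := hU ((hf x₁) measurableSet_Iio)
  have key : ∀ x : 𝒳, 0 < μ {ω | X ω = x} →
      ρ y x = (μ (U ⁻¹' ((f x) ⁻¹' Set.Iio y))).toReal := by
    intro x hx
    have hset : {ω | f (X ω) (U ω) < y ∧ X ω = x}
        = U ⁻¹' ((f x) ⁻¹' Set.Iio y) ∩ X ⁻¹' {x} := by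
      ext ω
      simp only [Set.mem_setOf_eq, Set.mem_inter_iff, Set.mem_preimage, Set.mem_Iio,
        Set.mem_singleton_iff]
      constructor
      · rintro ⟨h1, h2⟩; subst h2; exact ⟨h1, rfl⟩
      · rintro ⟨h1, h2⟩; subst h2; exact ⟨h1, rfl⟩
    have hXx : {ω | X ω = x} = X ⁻¹' {x} := rfl
    have hind : μ (U ⁻¹' ((f x) ⁻¹' Set.Iio y) ∩ X ⁻¹' {x})
        = μ (U ⁻¹' ((f x) ⁻¹' Set.Iio y)) * μ (X ⁻¹' {x}) :=
      hexo.measure_inter_preimage_eq_mul _ _ ((hf x) measurableSet_Iio)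
        (measurableSet_singleton x)
    have hne : (μ (X ⁻¹' {x})).toReal ≠ 0 :=
      (ENNReal.toReal_pos (by rw [hXx] at hx; exact hx.ne') (measure_ne_top μ _)).ne'
    rw [hρ, hset, hind, ENNReal.toReal_mul, hXx, mul_div_assoc, div_self hne, mul_one]
  have hgoalset : {ω | f x₀ (U ω) < y ∧ y ≤ f x₁ (U ω)} = A \ B := by
    ext ω
    simp [hA, hB, Set.mem_diff, not_lt]
  have hset2 : {ω | f x₁ (U ω) < y ∧ y ≤ f x₀ (U ω)} = B \ A := by
    ext ω
    simp [hA, hB, Set.mem_diff, not_lt]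
  have hdecomp : ∀ s t : Set Ω, MeasurableSet t →
      (μ s).toReal = (μ (s ∩ t)).toReal + (μ (s \ t)).toReal := by
    intro s t ht
    rw [← ENNReal.toReal_add (measure_ne_top μ _) (measure_ne_top μ _),
      measure_inter_add_diff s ht]
  have hA' := hdecomp A B hBm
  have hB' := hdecomp B A hAm
  have hBA : (μ (B ∩ A)).toReal = (μ (A ∩ B)).toReal := by rw [Set.inter_comm]
  rw [hgoalset, key x₀ h₀, key x₁ h₁, ← hA, ← hB]
  rcases hmono with h | h
  · rw [hgoalset] at h
    have ha : (μ (A \ B)).toReal = 0 := by rw [h]; simp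
    rw [ha]
    have hle : (μ A).toReal - (μ B).toReal ≤ 0 := by
      have hb : 0 ≤ (μ (B \ A)).toReal := ENNReal.toReal_nonneg
      nlinarith [hA', hB', hBA]
    rw [max_eq_right hle]
  · rw [hset2] at h
    have hb : (μ (B \ A)).toReal = 0 := by rw [h]; simp
    have hge : 0 ≤ (μ A).toReal - (μ B).toReal := by
      have ha : 0 ≤ (μ (A \ B)).toReal := ENNReal.toReal_nonneg
      nlinarith [hA', hB', hBA]
    rw [max_eq_left hge]
    nlinarith [hA', hB', hBA]
end

section
/- Identification of PN (Theorem 'Identification of PoC', PN part): In the scalar potential-outcomes model, assume exogeneity (U and X are independent under μ), assume monotonicity over potential outcomes at (x₀, x₁, y), assume μ {ω | X ω = x₀} > 0 and μ {ω | X ω = x₁} > 0, and assume ρ(y;x₁) < 1. Then the probability of necessity PN(y;x₀,x₁) := μ.real {ω | f x₀ (U ω) < y ∧ y ≤ Y ω ∧ X ω = x₁} / μ.real {ω | y ≤ Y ω ∧ X ω = x₁} is identified: PN(y;x₀,x₁) = max ((ρ(y;x₀) − ρ(y;x₁)) / (1 − ρ(y;x₁))) 0. -/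
open MeasureTheory ProbabilityTheory

/-- Identification of PN: under exogeneity and monotonicity over potential outcomes,
`PN(y;x₀,x₁) = max ((ρ(y;x₀) − ρ(y;x₁)) / (1 − ρ(y;x₁))) 0`. -/
theorem identification_of_PN
    {Ω 𝒳 : Type*} [MeasurableSpace Ω] [MeasurableSpace 𝒳] [MeasurableSingletonClass 𝒳]
    (μ : Measure Ω) [IsProbabilityMeasure μ]
    (U : Ω → ℝ) (hU : Measurable U) (X : Ω → 𝒳) (hX : Measurable X)
    (f : 𝒳 → ℝ → ℝ) (hf : ∀ x, Measurable (f x))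
    (hexo : IndepFun U X μ)
    (x₀ x₁ : 𝒳) (y : ℝ)
    (hmono : μ {ω | f x₀ (U ω) < y ∧ y ≤ f x₁ (U ω)} = 0 ∨
             μ {ω | f x₁ (U ω) < y ∧ y ≤ f x₀ (U ω)} = 0)
    (h₀ : 0 < μ {ω | X ω = x₀}) (h₁ : 0 < μ {ω | X ω = x₁})
    (ρ : ℝ → 𝒳 → ℝ)
    (hρ : ∀ (y' : ℝ) (x : 𝒳), ρ y' x =
      (μ {ω | f (X ω) (U ω) < y' ∧ X ω = x}).toReal / (μ {ω | X ω = x}).toReal)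
    (hρ₁ : ρ y x₁ < 1) :
    (μ {ω | f x₀ (U ω) < y ∧ y ≤ f (X ω) (U ω) ∧ X ω = x₁}).toReal
        / (μ {ω | y ≤ f (X ω) (U ω) ∧ X ω = x₁}).toReal =
      max ((ρ y x₀ - ρ y x₁) / (1 - ρ y x₁)) 0 := by
  set T₀ : Set ℝ := {u | f x₀ u < y} with hT₀
  set T₁ : Set ℝ := {u | f x₁ u < y} with hT₁
  have hT₀m : MeasurableSet T₀ := measurableSet_lt (hf x₀) measurable_const
  have hT₁m : MeasurableSet T₁ := measurableSet_lt (hf x₁) measurable_const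
  have prod : ∀ (T : Set ℝ), MeasurableSet T → ∀ x : 𝒳,
      μ (U ⁻¹' T ∩ X ⁻¹' {x}) = μ (U ⁻¹' T) * μ (X ⁻¹' {x}) := fun T hT x =>
    hexo.measure_inter_preimage_eq_mul T {x} hT (measurableSet_singleton x)
  have hXset : ∀ x : 𝒳, {ω | X ω = x} = X ⁻¹' {x} := fun x => rfl
  -- set identities
  have hset₀ : {ω | f (X ω) (U ω) < y ∧ X ω = x₀} = U ⁻¹' T₀ ∩ X ⁻¹' {x₀} := by
    ext ω
    simp only [Set.mem_setOf_eq, Set.mem_inter_iff, Set.mem_preimage,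
      Set.mem_singleton_iff, hT₀]
    constructor <;> rintro ⟨h, hx⟩ <;> subst hx <;> exact ⟨h, rfl⟩
  have hset₁ : {ω | f (X ω) (U ω) < y ∧ X ω = x₁} = U ⁻¹' T₁ ∩ X ⁻¹' {x₁} := by
    ext ω
    simp only [Set.mem_setOf_eq, Set.mem_inter_iff, Set.mem_preimage,
      Set.mem_singleton_iff, hT₁]
    constructor <;> rintro ⟨h, hx⟩ <;> subst hx <;> exact ⟨h, rfl⟩
  have hnum : {ω | f x₀ (U ω) < y ∧ y ≤ f (X ω) (U ω) ∧ X ω = x₁}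
      = U ⁻¹' (T₀ \ T₁) ∩ X ⁻¹' {x₁} := by
    ext ω
    simp only [Set.mem_setOf_eq, Set.mem_inter_iff, Set.mem_preimage, Set.mem_diff,
      Set.mem_singleton_iff, hT₀, hT₁, not_lt]
    constructor
    · rintro ⟨h1, h2, hx⟩; subst hx; exact ⟨⟨h1, h2⟩, rfl⟩
    · rintro ⟨⟨h1, h2⟩, hx⟩; subst hx; exact ⟨h1, h2, rfl⟩
  have hden : {ω | y ≤ f (X ω) (U ω) ∧ X ω = x₁} = U ⁻¹' T₁ᶜ ∩ X ⁻¹' {x₁} := by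
    ext ω
    simp only [Set.mem_setOf_eq, Set.mem_inter_iff, Set.mem_preimage, Set.mem_compl_iff,
      Set.mem_singleton_iff, hT₁, not_lt]
    constructor <;> rintro ⟨h, hx⟩ <;> subst hx <;> exact ⟨h, rfl⟩
  have hmono' : μ (U ⁻¹' (T₀ \ T₁)) = 0 ∨ μ (U ⁻¹' (T₁ \ T₀)) = 0 := by
    refine hmono.imp (fun h => ?_) (fun h => ?_)
    · convert h using 2; ext ω
      simp [hT₀, hT₁, Set.mem_diff, not_lt]
    · convert h using 2; ext ω
      simp [hT₀, hT₁, Set.mem_diff, not_lt]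
  -- abbreviations
  set p₀ : ℝ := (μ (X ⁻¹' {x₀})).toReal with hp₀
  set p₁ : ℝ := (μ (X ⁻¹' {x₁})).toReal with hp₁
  have hp₀pos : 0 < p₀ := ENNReal.toReal_pos h₀.ne' (measure_ne_top μ _)
  have hp₁pos : 0 < p₁ := ENNReal.toReal_pos h₁.ne' (measure_ne_top μ _)
  set a : ℝ := (μ (U ⁻¹' T₀)).toReal with ha
  set b : ℝ := (μ (U ⁻¹' T₁)).toReal with hb
  -- ρ values
  have hρ₀' : ρ y x₀ = a := by
    rw [hρ, hXset, hset₀, prod T₀ hT₀m, ENNReal.toReal_mul, mul_div_assoc,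
      div_self hp₀pos.ne', mul_one]
  have hρ₁' : ρ y x₁ = b := by
    rw [hρ, hXset, hset₁, prod T₁ hT₁m, ENNReal.toReal_mul, mul_div_assoc,
      div_self hp₁pos.ne', mul_one]
  have hb1 : b < 1 := hρ₁' ▸ hρ₁
  -- compl measure
  have hcompl : (μ (U ⁻¹' T₁ᶜ)).toReal = 1 - b := by
    rw [show U ⁻¹' T₁ᶜ = (U ⁻¹' T₁)ᶜ from rfl, prob_compl_eq_one_sub (hU hT₁m)]
    rw [ENNReal.toReal_sub_of_le (prob_le_one) ENNReal.one_ne_top]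
    simp [hb]
  -- rewrite goal
  rw [hnum, hden, prod _ (hT₀m.diff hT₁m) x₁, prod _ hT₁m.compl x₁,
    ENNReal.toReal_mul, ENNReal.toReal_mul, hρ₀', hρ₁',
    mul_div_mul_right _ _ hp₁pos.ne', hcompl]
  set d : ℝ := (μ (U ⁻¹' (T₀ \ T₁))).toReal with hd
  have hdiff₀ : d + (μ (U ⁻¹' T₀ ∩ U ⁻¹' T₁)).toReal = a := by
    rw [hd, ha, ← ENNReal.toReal_add (measure_ne_top μ _) (measure_ne_top μ _)]
    congr 1
    rw [show U ⁻¹' (T₀ \ T₁) = U ⁻¹' T₀ \ U ⁻¹' T₁ from rfl]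
    exact measure_diff_add_inter _ (hU hT₁m)
  rcases hmono' with h | h
  · -- d = 0, a ≤ b
    have hd0 : d = 0 := by rw [hd, h, ENNReal.toReal_zero]
    have hab : a ≤ b := by
      have : μ (U ⁻¹' T₀) ≤ μ (U ⁻¹' T₁) := by
        calc μ (U ⁻¹' T₀) = μ (U ⁻¹' (T₀ \ T₁)) + μ (U ⁻¹' (T₀ ∩ T₁)) :=
              (measure_diff_add_inter _ (hU hT₁m)).symm
          _ = μ (U ⁻¹' (T₀ ∩ T₁)) := by rw [h, zero_add]
          _ ≤ μ (U ⁻¹' T₁) := measure_mono (Set.preimage_mono Set.inter_subset_right)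
      exact ENNReal.toReal_mono (measure_ne_top μ _) this
    rw [hd0, zero_div, max_eq_right, eq_comm]
    exact div_nonpos_of_nonpos_of_nonneg (by linarith) (by linarith)
  · -- d = a - b
    have hbinter : (μ (U ⁻¹' T₀ ∩ U ⁻¹' T₁)).toReal = b := by
      rw [hb]
      congr 1
      have := measure_diff_add_inter (μ := μ) (U ⁻¹' T₁) (hU hT₀m)
      rw [show U ⁻¹' T₁ \ U ⁻¹' T₀ = U ⁻¹' (T₁ \ T₀) from rfl] at this
      rw [← this, h, zero_add, Set.inter_comm]
    have hdab : d = a - b := by linarith [hdiff₀, hbinter ▸ hdiff₀]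
    rw [hdab, max_eq_left]
    exact div_nonneg (by rw [← hdab, hd]; exact ENNReal.toReal_nonneg) (by linarith)
end

section
/- Identification of PS (Theorem 'Identification of PoC', PS part): In the scalar potential-outcomes model, assume exogeneity (U and X are independent under μ), assume monotonicity over potential outcomes at (x₀, x₁, y), assume μ {ω | X ω = x₀} > 0 and μ {ω | X ω = x₁} > 0, and assume ρ(y;x₀) > 0. Then the probability of sufficiency PS(y;x₀,x₁) := μ.real {ω | y ≤ f x₁ (U ω) ∧ Y ω < y ∧ X ω = x₀} / μ.real {ω | Y ω < y ∧ X ω = x₀} is identified: PS(y;x₀,x₁) = max ((ρ(y;x₀) − ρ(y;x₁)) / ρ(y;x₀)) 0. -/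
open MeasureTheory ProbabilityTheory

/-- Identification of PS: under exogeneity and monotonicity over potential outcomes,
`PS(y;x₀,x₁) = max ((ρ(y;x₀) − ρ(y;x₁)) / ρ(y;x₀)) 0`. -/
theorem identification_of_PS
    {Ω 𝒳 : Type*} [MeasurableSpace Ω] [MeasurableSpace 𝒳] [MeasurableSingletonClass 𝒳]
    (μ : Measure Ω) [IsProbabilityMeasure μ]
    (U : Ω → ℝ) (hU : Measurable U) (X : Ω → 𝒳) (hX : Measurable X)
    (f : 𝒳 → ℝ → ℝ) (hf : ∀ x, Measurable (f x))
    (hexo : IndepFun U X μ)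
    (x₀ x₁ : 𝒳) (y : ℝ)
    (hmono : μ {ω | f x₀ (U ω) < y ∧ y ≤ f x₁ (U ω)} = 0 ∨
             μ {ω | f x₁ (U ω) < y ∧ y ≤ f x₀ (U ω)} = 0)
    (h₀ : 0 < μ {ω | X ω = x₀}) (h₁ : 0 < μ {ω | X ω = x₁})
    (ρ : ℝ → 𝒳 → ℝ)
    (hρ : ∀ (y' : ℝ) (x : 𝒳), ρ y' x =
      (μ {ω | f (X ω) (U ω) < y' ∧ X ω = x}).toReal / (μ {ω | X ω = x}).toReal)
    (hρ₀ : 0 < ρ y x₀) :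
    (μ {ω | y ≤ f x₁ (U ω) ∧ f (X ω) (U ω) < y ∧ X ω = x₀}).toReal
        / (μ {ω | f (X ω) (U ω) < y ∧ X ω = x₀}).toReal =
      max ((ρ y x₀ - ρ y x₁) / ρ y x₀) 0 := by
  classical
  set S₀ : Set ℝ := {u | f x₀ u < y} with hS₀def
  set S₁ : Set ℝ := {u | f x₁ u < y} with hS₁def
  have mS₀ : MeasurableSet S₀ := measurableSet_lt (hf x₀) measurable_const
  have mS₁ : MeasurableSet S₁ := measurableSet_lt (hf x₁) measurable_const
  -- independence consequence
  have hind : ∀ (s : Set ℝ), MeasurableSet s → ∀ x : 𝒳,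
      μ (U ⁻¹' s ∩ X ⁻¹' {x}) = μ (U ⁻¹' s) * μ (X ⁻¹' {x}) := by
    intro s hs x
    exact hexo.measure_inter_preimage_eq_mul s {x} hs (measurableSet_singleton x)
  -- set identifications
  have hset₀ : {ω | f (X ω) (U ω) < y ∧ X ω = x₀} = U ⁻¹' S₀ ∩ X ⁻¹' {x₀} := by
    ext ω
    simp only [Set.mem_setOf_eq, Set.mem_inter_iff, Set.mem_preimage,
      Set.mem_singleton_iff, hS₀def]
    constructor
    · rintro ⟨h1, h2⟩; rw [h2] at h1; exact ⟨h1, h2⟩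
    · rintro ⟨h1, h2⟩; rw [h2]; exact ⟨h1, rfl⟩
  have hset₁ : {ω | f (X ω) (U ω) < y ∧ X ω = x₁} = U ⁻¹' S₁ ∩ X ⁻¹' {x₁} := by
    ext ω
    simp only [Set.mem_setOf_eq, Set.mem_inter_iff, Set.mem_preimage,
      Set.mem_singleton_iff, hS₁def]
    constructor
    · rintro ⟨h1, h2⟩; rw [h2] at h1; exact ⟨h1, h2⟩
    · rintro ⟨h1, h2⟩; rw [h2]; exact ⟨h1, rfl⟩
  have hsetN : {ω | y ≤ f x₁ (U ω) ∧ f (X ω) (U ω) < y ∧ X ω = x₀}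
      = U ⁻¹' (S₀ ∩ S₁ᶜ) ∩ X ⁻¹' {x₀} := by
    ext ω
    simp only [Set.mem_setOf_eq, Set.mem_inter_iff, Set.mem_preimage,
      Set.mem_singleton_iff, Set.mem_compl_iff, hS₀def, hS₁def, not_lt]
    constructor
    · rintro ⟨h1, h2, h3⟩; rw [h3] at h2; exact ⟨⟨h2, h1⟩, h3⟩
    · rintro ⟨⟨h1, h2⟩, h3⟩; rw [h3]; exact ⟨h2, h1, rfl⟩
  have hX₀ : {ω | X ω = x₀} = X ⁻¹' {x₀} := rfl
  have hX₁ : {ω | X ω = x₁} = X ⁻¹' {x₁} := rfl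
  -- measures
  set p₀ : ENNReal := μ (X ⁻¹' {x₀}) with hp₀def
  set p₁ : ENNReal := μ (X ⁻¹' {x₁}) with hp₁def
  set A : ENNReal := μ (U ⁻¹' S₀) with hAdef
  set B : ENNReal := μ (U ⁻¹' S₁) with hBdef
  set I : ENNReal := μ (U ⁻¹' (S₀ ∩ S₁)) with hIdef
  set C : ENNReal := μ (U ⁻¹' (S₀ ∩ S₁ᶜ)) with hCdef
  set D : ENNReal := μ (U ⁻¹' (S₁ ∩ S₀ᶜ)) with hDdef
  have hfin : ∀ s : Set Ω, μ s ≠ ⊤ := fun s => measure_ne_top μ s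
  have hA : A = I + C := by
    rw [hAdef, hIdef, hCdef]
    have hu : U ⁻¹' S₀ = U ⁻¹' (S₀ ∩ S₁) ∪ U ⁻¹' (S₀ ∩ S₁ᶜ) := by
      rw [← Set.preimage_union, Set.inter_union_compl]
    rw [hu, measure_union _ (hU (mS₀.inter mS₁.compl))]
    exact (Set.disjoint_of_subset inf_le_right inf_le_right
      disjoint_compl_right).preimage U
  have hB : B = I + D := by
    rw [hBdef, hIdef, hDdef]
    have hu : U ⁻¹' S₁ = U ⁻¹' (S₀ ∩ S₁) ∪ U ⁻¹' (S₁ ∩ S₀ᶜ) := by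
      rw [← Set.preimage_union]
      congr 1
      rw [Set.inter_comm S₀ S₁, Set.inter_union_compl]
    rw [hu, measure_union _ (hU (mS₁.inter mS₀.compl))]
    exact (Set.disjoint_of_subset inf_le_left inf_le_right
      disjoint_compl_right).preimage U
  -- real-valued quantities
  have hρ₀' : ρ y x₀ = A.toReal := by
    rw [hρ, hset₀, hX₀, hind S₀ mS₀ x₀, ENNReal.toReal_mul, ← hp₀def, ← hAdef,
      mul_div_assoc, div_self, mul_one]
    exact ENNReal.toReal_ne_zero.mpr ⟨h₀.ne', hfin _⟩
  have hρ₁' : ρ y x₁ = B.toReal := by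
    rw [hρ, hset₁, hX₁, hind S₁ mS₁ x₁, ENNReal.toReal_mul, ← hp₁def, ← hBdef,
      mul_div_assoc, div_self, mul_one]
    exact ENNReal.toReal_ne_zero.mpr ⟨h₁.ne', hfin _⟩
  have hApos : 0 < A.toReal := by rw [← hρ₀']; exact hρ₀
  have hp₀pos : 0 < p₀.toReal :=
    ENNReal.toReal_pos h₀.ne' (hfin _)
  -- LHS simplification
  have hLHS : (μ {ω | y ≤ f x₁ (U ω) ∧ f (X ω) (U ω) < y ∧ X ω = x₀}).toReal
      / (μ {ω | f (X ω) (U ω) < y ∧ X ω = x₀}).toReal = C.toReal / A.toReal := by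
    rw [hsetN, hset₀, hind _ (mS₀.inter mS₁.compl) x₀, hind S₀ mS₀ x₀,
      ENNReal.toReal_mul, ENNReal.toReal_mul, ← hCdef, ← hAdef, ← hp₀def,
      mul_div_mul_right _ _ hp₀pos.ne']
  rw [hLHS, hρ₀', hρ₁']
  -- case split on monotonicity
  have hmono' : C = 0 ∨ D = 0 := by
    rcases hmono with h | h
    · left
      rw [hCdef]
      convert h using 2
      ext u
      simp only [Set.mem_preimage, Set.mem_inter_iff, Set.mem_compl_iff,
        Set.mem_setOf_eq, hS₀def, hS₁def, not_lt]
    · right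
      rw [hDdef]
      convert h using 2
      ext u
      simp only [Set.mem_preimage, Set.mem_inter_iff, Set.mem_compl_iff,
        Set.mem_setOf_eq, hS₀def, hS₁def, not_lt]
  rcases hmono' with hC0 | hD0
  · -- C = 0, so A = I ≤ B, PS = 0
    have hAB : A.toReal ≤ B.toReal := by
      have h : A ≤ B := by rw [hA, hB, hC0, add_zero]; exact le_add_right le_rfl
      exact ENNReal.toReal_mono (hfin _) h
    rw [hC0]
    simp only [ENNReal.toReal_zero, zero_div]
    rw [max_eq_right]
    exact div_nonpos_of_nonpos_of_nonneg (by linarith) hApos.le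
  · -- D = 0, so C.toReal = A.toReal - B.toReal ≥ 0
    have hIC : A.toReal = I.toReal + C.toReal := by
      rw [hA, ENNReal.toReal_add (hfin _) (hfin _)]
    have hBI : B.toReal = I.toReal := by
      rw [hB, hD0, add_zero]
    have hCval : C.toReal = A.toReal - B.toReal := by
      rw [hIC, hBI]; ring
    rw [hCval, max_eq_left]
    apply div_nonneg _ hApos.le
    rw [← hCval]
    exact ENNReal.toReal_nonneg
end

section
/- Conditional monotonicity of the structural function implies conditional monotonicity over potential outcomes (one direction of the paper's theorem relating the conditional monotonicity assumptions, totally ordered vector case): Assume conditional almost-sure monotonicity of the structural function over U, i.e. there is a measurable set S ⊆ 𝒰 with ν Sᶜ = 0 such that either g x is monotone increasing on S for every x ∈ 𝒳, or g x is monotone decreasing on S for every x ∈ 𝒳. Then conditional monotonicity over potential outcomes holds: for all x₀, x₁ ∈ 𝒳 and all y ∈ 𝒴, ν {u | g x₀ u ≺ y ∧ y ≼ g x₁ u} = 0 or ν {u | g x₁ u ≺ y ∧ y ≼ g x₀ u} = 0. -/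
open MeasureTheory

/-- Conditional almost-sure monotonicity of the structural function over `U`
implies conditional monotonicity over the potential outcomes
(totally ordered vector case). -/
theorem cond_monotonicity_over_structural_function_implies_cond_monotonicity_over_PO
    {𝒳 𝒰 𝒴 : Type*} [LinearOrder 𝒰] [LinearOrder 𝒴] [MeasurableSpace 𝒰]
    (ν : Measure 𝒰) [IsProbabilityMeasure ν]
    (g : 𝒳 → 𝒰 → 𝒴)
    (hmeas : ∀ (x : 𝒳) (y : 𝒴),
      MeasurableSet {u | g x u < y} ∧ MeasurableSet {u | y ≤ g x u})
    (hmono : ∃ S : Set 𝒰, MeasurableSet S ∧ ν Sᶜ = 0 ∧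
      ((∀ x, MonotoneOn (g x) S) ∨ (∀ x, AntitoneOn (g x) S))) :
    ∀ (x₀ x₁ : 𝒳) (y : 𝒴),
      ν {u | g x₀ u < y ∧ y ≤ g x₁ u} = 0 ∨ ν {u | g x₁ u < y ∧ y ≤ g x₀ u} = 0 := by
  obtain ⟨S, hS, hSc, hcase⟩ := hmono
  intro x₀ x₁ y
  by_cases h : ({u | g x₀ u < y ∧ y ≤ g x₁ u} ∩ S).Nonempty
  · right
    obtain ⟨u, ⟨hu0, hu1⟩, huS⟩ := h
    have hsub : {u | g x₁ u < y ∧ y ≤ g x₀ u} ⊆ Sᶜ := by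
      rintro v ⟨hv1, hv0⟩ hvS
      rcases hcase with hm | hm
      · rcases le_total u v with huv | hvu
        · exact absurd (hm x₁ huS hvS huv) (not_le.mpr (lt_of_lt_of_le hv1 hu1))
        · exact absurd (hm x₀ hvS huS hvu) (not_le.mpr (lt_of_lt_of_le hu0 hv0))
      · rcases le_total u v with huv | hvu
        · exact absurd (hm x₀ huS hvS huv) (not_le.mpr (lt_of_lt_of_le hu0 hv0))
        · exact absurd (hm x₁ hvS huS hvu) (not_le.mpr (lt_of_lt_of_le hv1 hu1))
    exact measure_mono_null hsub hSc
  · left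
    exact measure_mono_null (fun v hv hvS => h ⟨v, hv, hvS⟩) hSc
end

section
/- Identification of conditional PNS (Theorem 'Identification of conditional PoC', PNS part): In the vector potential-outcomes model with covariates, assume conditional exogeneity given C = c (U and X independent under μ_c), assume conditional monotonicity over potential outcomes at (x₀, x₁, y), i.e. μ_c {ω | Y_{x₀} ω ≺ y ∧ y ≼ Y_{x₁} ω} = 0 or μ_c {ω | Y_{x₁} ω ≺ y ∧ y ≼ Y_{x₀} ω} = 0, and assume μ_c {ω | X ω = x₀} > 0 and μ_c {ω | X ω = x₁} > 0. Then the conditional probability of necessity and sufficiency PNS(y;x₀,x₁,c) := μ_c.real {ω | f x₀ c (U ω) ≺ y ∧ y ≼ f x₁ c (U ω)} satisfies PNS(y;x₀,x₁,c) = max (ρ(y;x₀,c) − ρ(y;x₁,c)) 0. -/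
open MeasureTheory ProbabilityTheory

/-- Identification of conditional PNS: under conditional exogeneity and conditional
monotonicity over potential outcomes, `PNS(y;x₀,x₁,c) = max (ρ(y;x₀,c) − ρ(y;x₁,c)) 0`. -/
theorem identification_of_conditional_PNS
    {Ω 𝒳 𝒞 𝒰 𝒴 : Type*} [MeasurableSpace Ω]
    [MeasurableSpace 𝒳] [MeasurableSingletonClass 𝒳]
    [MeasurableSpace 𝒞] [MeasurableSingletonClass 𝒞]
    [LinearOrder 𝒰] [MeasurableSpace 𝒰] [LinearOrder 𝒴] [MeasurableSpace 𝒴]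
    (hRays : ∀ y : 𝒴, MeasurableSet {v : 𝒴 | v < y} ∧ MeasurableSet {v : 𝒴 | v ≤ y})
    (μ : Measure Ω) [IsProbabilityMeasure μ]
    (U : Ω → 𝒰) (hU : Measurable U) (X : Ω → 𝒳) (hX : Measurable X)
    (C : Ω → 𝒞) (hC : Measurable C)
    (f : 𝒳 → 𝒞 → 𝒰 → 𝒴) (hf : ∀ x c, Measurable (f x c))
    (c : 𝒞) (hc : 0 < μ {ω | C ω = c})
    (μc : Measure Ω) (hμc : μc = μ[|{ω | C ω = c}])
    (hexo : IndepFun U X μc)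
    (x₀ x₁ : 𝒳) (y : 𝒴)
    (hmono : μc {ω | f x₀ (C ω) (U ω) < y ∧ y ≤ f x₁ (C ω) (U ω)} = 0 ∨
             μc {ω | f x₁ (C ω) (U ω) < y ∧ y ≤ f x₀ (C ω) (U ω)} = 0)
    (h₀ : 0 < μc {ω | X ω = x₀}) (h₁ : 0 < μc {ω | X ω = x₁})
    (ρ : 𝒴 → 𝒳 → ℝ)
    (hρ : ∀ (y' : 𝒴) (x : 𝒳), ρ y' x =
      (μc {ω | f (X ω) (C ω) (U ω) < y' ∧ X ω = x}).toReal / (μc {ω | X ω = x}).toReal) :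
    (μc {ω | f x₀ c (U ω) < y ∧ y ≤ f x₁ c (U ω)}).toReal = max (ρ y x₀ - ρ y x₁) 0 := by
  obtain ⟨hray_lt, hray_le⟩ := hRays y
  have hCc : MeasurableSet {ω | C ω = c} := hC (measurableSet_singleton c)
  have hprob : IsProbabilityMeasure μc := by
    rw [hμc]; exact cond_isProbabilityMeasure hc.ne'
  -- a.e., C = c under μc
  have hCae : ∀ᵐ ω ∂μc, C ω = c := by
    rw [ae_iff, hμc, cond_apply hCc]
    have : {ω | C ω = c} ∩ {a | ¬ C a = c} = ∅ := by
      ext ω; simp (config := {contextual := true})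
    rw [this, measure_empty, mul_zero]
  -- measurable sets in 𝒰
  set A₀ : Set 𝒰 := f x₀ c ⁻¹' {v | v < y} with hA₀
  set A₁ : Set 𝒰 := f x₁ c ⁻¹' {v | v < y} with hA₁
  have hmA₀ : MeasurableSet A₀ := hf x₀ c hray_lt
  have hmA₁ : MeasurableSet A₁ := hf x₁ c hray_lt
  -- quantities
  set a : ENNReal := μc (U ⁻¹' A₀) with ha
  set b : ENNReal := μc (U ⁻¹' A₁) with hb
  set i : ENNReal := μc (U ⁻¹' A₀ ∩ U ⁻¹' A₁) with hi
  have hane : a ≠ ⊤ := measure_ne_top _ _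
  have hbne : b ≠ ⊤ := measure_ne_top _ _
  have hine : i ≠ ⊤ := measure_ne_top _ _
  -- ρ computations
  have hρ_eq : ∀ x : 𝒳, 0 < μc {ω | X ω = x} →
      ρ y x = (μc (U ⁻¹' (f x c ⁻¹' {v | v < y}))).toReal := by
    intro x hx
    have hset : {ω | f (X ω) (C ω) (U ω) < y ∧ X ω = x}
        =ᵐ[μc] ((U ⁻¹' (f x c ⁻¹' {v | v < y}) ∩ X ⁻¹' {x} : Set Ω)) := by
      refine Filter.eventuallyEq_set.2 ?_
      filter_upwards [hCae] with ω hω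
      constructor
      · rintro ⟨h1, h2⟩; rw [hω, h2] at h1; exact ⟨h1, h2⟩
      · rintro ⟨h1, h2⟩
        simp only [Set.mem_preimage, Set.mem_singleton_iff] at h1 h2
        exact ⟨by rw [hω, h2]; exact h1, h2⟩
    have hindep := hexo.measure_inter_preimage_eq_mul
      (s := f x c ⁻¹' {v | v < y}) (t := {x}) (hf x c hray_lt) (measurableSet_singleton x)
    rw [hρ, measure_congr hset, hindep]
    have hpne : (μc (X ⁻¹' {x})).toReal ≠ 0 := by
      simp only [ENNReal.toReal_ne_zero]
      exact ⟨hx.ne', measure_ne_top _ _⟩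
    have hXset : X ⁻¹' {x} = {ω | X ω = x} := rfl
    rw [ENNReal.toReal_mul, hXset, mul_div_assoc, div_self (by rwa [← hXset]), mul_one]
  have hρ₀ : ρ y x₀ = a.toReal := hρ_eq x₀ h₀
  have hρ₁ : ρ y x₁ = b.toReal := hρ_eq x₁ h₁
  -- replace C ω by c in the monotonicity hypothesis and goal set
  have hset01 : {ω | f x₀ (C ω) (U ω) < y ∧ y ≤ f x₁ (C ω) (U ω)}
      =ᵐ[μc] {ω | f x₀ c (U ω) < y ∧ y ≤ f x₁ c (U ω)} := by
    refine Filter.eventuallyEq_set.2 ?_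
    filter_upwards [hCae] with ω hω
    simp only [Set.mem_setOf_eq, hω]
  have hset10 : {ω | f x₁ (C ω) (U ω) < y ∧ y ≤ f x₀ (C ω) (U ω)}
      =ᵐ[μc] {ω | f x₁ c (U ω) < y ∧ y ≤ f x₀ c (U ω)} := by
    refine Filter.eventuallyEq_set.2 ?_
    filter_upwards [hCae] with ω hω
    simp only [Set.mem_setOf_eq, hω]
  -- diff descriptions
  have hD01 : {ω | f x₀ c (U ω) < y ∧ y ≤ f x₁ c (U ω)} = U ⁻¹' A₀ \ U ⁻¹' A₁ := by
    ext ω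
    simp only [Set.mem_setOf_eq, Set.mem_diff, Set.mem_preimage, hA₀, hA₁, not_lt]
  have hD10 : {ω | f x₁ c (U ω) < y ∧ y ≤ f x₀ c (U ω)} = U ⁻¹' A₁ \ U ⁻¹' A₀ := by
    ext ω
    simp only [Set.mem_setOf_eq, Set.mem_diff, Set.mem_preimage, hA₀, hA₁, not_lt]
  have hsplit₀ : i + μc (U ⁻¹' A₀ \ U ⁻¹' A₁) = a :=
    measure_inter_add_diff _ (hU hmA₁)
  have hsplit₁ : μc (U ⁻¹' A₁ ∩ U ⁻¹' A₀) + μc (U ⁻¹' A₁ \ U ⁻¹' A₀) = b :=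
    measure_inter_add_diff _ (hU hmA₀)
  rw [Set.inter_comm] at hsplit₁
  rw [hD01, hρ₀, hρ₁]
  rcases hmono with hm | hm
  · -- μc (A₀ \ A₁) = 0, so PNS = 0 and a ≤ b
    have h0 : μc (U ⁻¹' A₀ \ U ⁻¹' A₁) = 0 := by
      rw [← hD01, ← measure_congr hset01, hm]
    have hab : a ≤ b := by
      rw [← hsplit₀, h0, add_zero, ← hsplit₁]
      exact le_self_add
    rw [h0, ENNReal.toReal_zero]
    rw [max_eq_right]
    linarith [ENNReal.toReal_le_toReal hane hbne |>.2 hab]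
  · -- μc (A₁ \ A₀) = 0, so b = i and PNS = a - b
    have h0 : μc (U ⁻¹' A₁ \ U ⁻¹' A₀) = 0 := by
      rw [← hD10, ← measure_congr hset10, hm]
    rw [h0, add_zero] at hsplit₁
    have hia : i ≤ a := hsplit₀ ▸ le_self_add
    have : (μc (U ⁻¹' A₀ \ U ⁻¹' A₁)).toReal = a.toReal - b.toReal := by
      have := congrArg ENNReal.toReal hsplit₀
      rw [ENNReal.toReal_add hine (measure_ne_top _ _)] at this
      rw [← hsplit₁]
      linarith
    rw [this, max_eq_left]
    have hba : b ≤ a := hsplit₁ ▸ hia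
    linarith [ENNReal.toReal_le_toReal hbne hane |>.2 hba]
end

section
/- Identification of conditional PN (Theorem 'Identification of conditional PoC', PN part): In the vector potential-outcomes model with covariates, assume conditional exogeneity given C = c (U and X independent under μ_c), assume conditional monotonicity over potential outcomes at (x₀, x₁, y), i.e. μ_c {ω | Y_{x₀} ω ≺ y ∧ y ≼ Y_{x₁} ω} = 0 or μ_c {ω | Y_{x₁} ω ≺ y ∧ y ≼ Y_{x₀} ω} = 0, assume μ_c {ω | X ω = x₀} > 0 and μ_c {ω | X ω = x₁} > 0, and assume ρ(y;x₁,c) < 1. Then the conditional probability of necessity PN(y;x₀,x₁,c) := μ_c.real {ω | f x₀ c (U ω) ≺ y ∧ y ≼ Y ω ∧ X ω = x₁} / μ_c.real {ω | y ≼ Y ω ∧ X ω = x₁} is identified: PN(y;x₀,x₁,c) = max ((ρ(y;x₀,c) − ρ(y;x₁,c)) / (1 − ρ(y;x₁,c))) 0. -/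
open MeasureTheory ProbabilityTheory

/-- Identification of conditional PN: under conditional exogeneity and conditional
monotonicity over potential outcomes,
`PN(y;x₀,x₁,c) = max ((ρ(y;x₀,c) − ρ(y;x₁,c)) / (1 − ρ(y;x₁,c))) 0`. -/
theorem identification_of_conditional_PN
    {Ω 𝒳 𝒞 𝒰 𝒴 : Type*} [MeasurableSpace Ω]
    [MeasurableSpace 𝒳] [MeasurableSingletonClass 𝒳]
    [MeasurableSpace 𝒞] [MeasurableSingletonClass 𝒞]
    [LinearOrder 𝒰] [MeasurableSpace 𝒰] [LinearOrder 𝒴] [MeasurableSpace 𝒴]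
    (hRays : ∀ y : 𝒴, MeasurableSet {v : 𝒴 | v < y} ∧ MeasurableSet {v : 𝒴 | v ≤ y})
    (μ : Measure Ω) [IsProbabilityMeasure μ]
    (U : Ω → 𝒰) (hU : Measurable U) (X : Ω → 𝒳) (hX : Measurable X)
    (C : Ω → 𝒞) (hC : Measurable C)
    (f : 𝒳 → 𝒞 → 𝒰 → 𝒴) (hf : ∀ x c, Measurable (f x c))
    (c : 𝒞) (hc : 0 < μ {ω | C ω = c})
    (μc : Measure Ω) (hμc : μc = μ[|{ω | C ω = c}])
    (hexo : IndepFun U X μc)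
    (x₀ x₁ : 𝒳) (y : 𝒴)
    (hmono : μc {ω | f x₀ (C ω) (U ω) < y ∧ y ≤ f x₁ (C ω) (U ω)} = 0 ∨
             μc {ω | f x₁ (C ω) (U ω) < y ∧ y ≤ f x₀ (C ω) (U ω)} = 0)
    (h₀ : 0 < μc {ω | X ω = x₀}) (h₁ : 0 < μc {ω | X ω = x₁})
    (ρ : 𝒴 → 𝒳 → ℝ)
    (hρ : ∀ (y' : 𝒴) (x : 𝒳), ρ y' x =
      (μc {ω | f (X ω) (C ω) (U ω) < y' ∧ X ω = x}).toReal / (μc {ω | X ω = x}).toReal)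
    (hρ₁ : ρ y x₁ < 1) :
    (μc {ω | f x₀ c (U ω) < y ∧ y ≤ f (X ω) (C ω) (U ω) ∧ X ω = x₁}).toReal
        / (μc {ω | y ≤ f (X ω) (C ω) (U ω) ∧ X ω = x₁}).toReal =
      max ((ρ y x₀ - ρ y x₁) / (1 - ρ y x₁)) 0 := by
  classical
  have hsC : MeasurableSet {ω | C ω = c} := hC (measurableSet_singleton c)
  have hprob : IsProbabilityMeasure μc := by
    rw [hμc]; exact cond_isProbabilityMeasure hc.ne'
  -- a.e. C = c
  have hCc : ∀ᵐ ω ∂μc, C ω = c := by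
    rw [hμc, Filter.Eventually, mem_ae_iff]
    rw [cond_apply hsC, Set.inter_compl_self, measure_empty, mul_zero]
  -- basic sets
  set S₀ : Set 𝒰 := {u | f x₀ c u < y} with hS₀def
  set S₁ : Set 𝒰 := {u | f x₁ c u < y} with hS₁def
  set A : Set 𝒰 := {u | f x₀ c u < y ∧ y ≤ f x₁ c u} with hAdef
  set B : Set 𝒰 := {u | f x₁ c u < y ∧ y ≤ f x₀ c u} with hBdef
  have hAeq : A = S₀ \ S₁ := by
    ext u; simp [hAdef, hS₀def, hS₁def, Set.mem_diff, not_lt]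
  have hBeq : B = S₁ \ S₀ := by
    ext u; simp [hBdef, hS₀def, hS₁def, Set.mem_diff, not_lt, and_comm]
  have hmS₀ : MeasurableSet S₀ := hf x₀ c (hRays y).1
  have hmS₁ : MeasurableSet S₁ := hf x₁ c (hRays y).1
  have hmA : MeasurableSet A := hAeq ▸ hmS₀.diff hmS₁
  -- independence helper
  have hind : ∀ (T : Set 𝒰) (x : 𝒳), MeasurableSet T →
      μc (U ⁻¹' T ∩ {ω | X ω = x}) = μc (U ⁻¹' T) * μc {ω | X ω = x} := fun T x hT =>
    hexo.measure_inter_preimage_eq_mul T {x} hT (measurableSet_singleton x)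
  -- congruence helper
  have hcongr : ∀ (T : Set 𝒰) (x : 𝒳) (s : Set Ω), MeasurableSet T →
      (∀ ω, C ω = c → (ω ∈ s ↔ U ω ∈ T ∧ X ω = x)) →
      μc s = μc (U ⁻¹' T) * μc {ω | X ω = x} := by
    intro T x s hT hs
    rw [← hind T x hT]
    apply measure_congr
    rw [Filter.eventuallyEq_set]
    filter_upwards [hCc] with ω hω
    rw [hs ω hω]
    simp [Set.mem_inter_iff, Set.mem_preimage, Set.mem_setOf_eq]
  have hm₁ : (0:ℝ) < (μc {ω | X ω = x₁}).toReal :=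
    ENNReal.toReal_pos h₁.ne' (measure_ne_top _ _)
  -- ρ values
  have hρval : ∀ x : 𝒳, 0 < μc {ω | X ω = x} →
      ρ y x = (μc (U ⁻¹' {u | f x c u < y})).toReal := by
    intro x hx
    rw [hρ y x,
      hcongr {u | f x c u < y} x _ (hf x c (hRays y).1) (by
        intro ω hω
        simp only [Set.mem_setOf_eq, hω]
        constructor
        · rintro ⟨h1, rfl⟩; exact ⟨h1, rfl⟩
        · rintro ⟨h1, rfl⟩; exact ⟨h1, rfl⟩)]
    rw [ENNReal.toReal_mul,
      mul_div_assoc, div_self (ENNReal.toReal_pos hx.ne' (measure_ne_top _ _)).ne', mul_one]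
  set p₀ : ℝ := (μc (U ⁻¹' S₀)).toReal with hp₀def
  set p₁ : ℝ := (μc (U ⁻¹' S₁)).toReal with hp₁def
  have hρ0 : ρ y x₀ = p₀ := hρval x₀ h₀
  have hρ1 : ρ y x₁ = p₁ := hρval x₁ h₁
  have hp₁lt : p₁ < 1 := by rw [← hρ1]; exact hρ₁
  -- numerator
  have hnum : μc {ω | f x₀ c (U ω) < y ∧ y ≤ f (X ω) (C ω) (U ω) ∧ X ω = x₁}
      = μc (U ⁻¹' A) * μc {ω | X ω = x₁} := by
    apply hcongr A x₁ _ hmA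
    intro ω hω
    simp only [Set.mem_setOf_eq, hAdef, hω]
    constructor
    · rintro ⟨h1, h2, rfl⟩; exact ⟨⟨h1, h2⟩, rfl⟩
    · rintro ⟨⟨h1, h2⟩, rfl⟩; exact ⟨h1, h2, rfl⟩
  -- denominator
  have hden : μc {ω | y ≤ f (X ω) (C ω) (U ω) ∧ X ω = x₁}
      = μc (U ⁻¹' S₁ᶜ) * μc {ω | X ω = x₁} := by
    apply hcongr S₁ᶜ x₁ _ hmS₁.compl
    intro ω hω
    simp only [Set.mem_setOf_eq, Set.mem_compl_iff, hS₁def, not_lt, hω]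
    constructor
    · rintro ⟨h1, rfl⟩; exact ⟨h1, rfl⟩
    · rintro ⟨h1, rfl⟩; exact ⟨h1, rfl⟩
  have hcompl : (μc (U ⁻¹' S₁ᶜ)).toReal = 1 - p₁ := by
    rw [Set.preimage_compl, prob_compl_eq_one_sub (hU hmS₁)]
    rw [ENNReal.toReal_sub_of_le prob_le_one ENNReal.one_ne_top, ENNReal.toReal_one]
  have hdpos : (0:ℝ) < 1 - p₁ := by linarith
  rw [hnum, hden, ENNReal.toReal_mul, ENNReal.toReal_mul, hcompl,
    mul_div_mul_right _ _ hm₁.ne', hρ0, hρ1]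
  -- rewrite hmono
  have hA0 : μc {ω | f x₀ (C ω) (U ω) < y ∧ y ≤ f x₁ (C ω) (U ω)} = μc (U ⁻¹' A) := by
    apply measure_congr
    rw [Filter.eventuallyEq_set]
    filter_upwards [hCc] with ω hω
    simp [Set.mem_setOf_eq, hAdef, hω]
  have hB0 : μc {ω | f x₁ (C ω) (U ω) < y ∧ y ≤ f x₀ (C ω) (U ω)} = μc (U ⁻¹' B) := by
    apply measure_congr
    rw [Filter.eventuallyEq_set]
    filter_upwards [hCc] with ω hω
    simp [Set.mem_setOf_eq, hBdef, hω]
  rw [hA0, hB0] at hmono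
  rcases hmono with hz | hz
  · -- A null: PN = 0 and ρ₀ ≤ ρ₁
    have ha : (μc (U ⁻¹' A)).toReal = 0 := by rw [hz]; simp
    have hle : p₀ ≤ p₁ := by
      have hsub : U ⁻¹' S₀ ⊆ U ⁻¹' S₁ ∪ U ⁻¹' A := by
        intro ω hω
        rcases lt_or_ge (f x₁ c (U ω)) y with h | h
        · exact Or.inl h
        · exact Or.inr ⟨hω, h⟩
      have : μc (U ⁻¹' S₀) ≤ μc (U ⁻¹' S₁) := by
        calc μc (U ⁻¹' S₀) ≤ μc (U ⁻¹' S₁ ∪ U ⁻¹' A) := measure_mono hsub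
          _ ≤ μc (U ⁻¹' S₁) + μc (U ⁻¹' A) := measure_union_le _ _
          _ = μc (U ⁻¹' S₁) := by rw [hz, add_zero]
      exact ENNReal.toReal_mono (measure_ne_top _ _) this
    rw [ha, zero_div, max_eq_right]
    exact div_nonpos_of_nonpos_of_nonneg (by linarith) hdpos.le
  · -- B null: a = p₀ - p₁ ≥ 0
    have hinter : μc (U ⁻¹' S₀ ∩ U ⁻¹' S₁) = μc (U ⁻¹' S₁) := by
      apply le_antisymm (measure_mono Set.inter_subset_right)
      have hsub : U ⁻¹' S₁ ⊆ (U ⁻¹' S₀ ∩ U ⁻¹' S₁) ∪ U ⁻¹' B := by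
        intro ω hω
        rcases lt_or_ge (f x₀ c (U ω)) y with h | h
        · exact Or.inl ⟨h, hω⟩
        · exact Or.inr ⟨hω, h⟩
      calc μc (U ⁻¹' S₁) ≤ μc ((U ⁻¹' S₀ ∩ U ⁻¹' S₁) ∪ U ⁻¹' B) := measure_mono hsub
        _ ≤ μc (U ⁻¹' S₀ ∩ U ⁻¹' S₁) + μc (U ⁻¹' B) := measure_union_le _ _
        _ = μc (U ⁻¹' S₀ ∩ U ⁻¹' S₁) := by rw [hz, add_zero]
    have hsplit : μc (U ⁻¹' S₀ ∩ U ⁻¹' S₁) + μc (U ⁻¹' A) = μc (U ⁻¹' S₀) := by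
      have : U ⁻¹' A = U ⁻¹' S₀ \ U ⁻¹' S₁ := by rw [hAeq, Set.preimage_diff]
      rw [this]
      exact measure_inter_add_diff _ (hU hmS₁)
    rw [hinter] at hsplit
    have hsplit' : p₁ + (μc (U ⁻¹' A)).toReal = p₀ := by
      rw [hp₁def, hp₀def, ← ENNReal.toReal_add (measure_ne_top _ _) (measure_ne_top _ _), hsplit]
    have ha : (μc (U ⁻¹' A)).toReal = p₀ - p₁ := by linarith
    have hanonneg : (0:ℝ) ≤ p₀ - p₁ := by rw [← ha]; exact ENNReal.toReal_nonneg
    rw [ha, max_eq_left]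
    exact div_nonneg hanonneg hdpos.le
end

section
/- Identification of conditional PS (Theorem 'Identification of conditional PoC', PS part): In the vector potential-outcomes model with covariates, assume conditional exogeneity given C = c (U and X independent under μ_c), assume conditional monotonicity over potential outcomes at (x₀, x₁, y), i.e. μ_c {ω | Y_{x₀} ω ≺ y ∧ y ≼ Y_{x₁} ω} = 0 or μ_c {ω | Y_{x₁} ω ≺ y ∧ y ≼ Y_{x₀} ω} = 0, assume μ_c {ω | X ω = x₀} > 0 and μ_c {ω | X ω = x₁} > 0, and assume ρ(y;x₀,c) > 0. Then the conditional probability of sufficiency PS(y;x₀,x₁,c) := μ_c.real {ω | y ≼ f x₁ c (U ω) ∧ Y ω ≺ y ∧ X ω = x₀} / μ_c.real {ω | Y ω ≺ y ∧ X ω = x₀} is identified: PS(y;x₀,x₁,c) = max ((ρ(y;x₀,c) − ρ(y;x₁,c)) / ρ(y;x₀,c)) 0. -/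
open MeasureTheory ProbabilityTheory

/-- Identification of conditional PS: under conditional exogeneity and conditional
monotonicity over potential outcomes,
`PS(y;x₀,x₁,c) = max ((ρ(y;x₀,c) − ρ(y;x₁,c)) / ρ(y;x₀,c)) 0`. -/
theorem identification_of_conditional_PS
    {Ω 𝒳 𝒞 𝒰 𝒴 : Type*} [MeasurableSpace Ω]
    [MeasurableSpace 𝒳] [MeasurableSingletonClass 𝒳]
    [MeasurableSpace 𝒞] [MeasurableSingletonClass 𝒞]
    [LinearOrder 𝒰] [MeasurableSpace 𝒰] [LinearOrder 𝒴] [MeasurableSpace 𝒴]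
    (hRays : ∀ y : 𝒴, MeasurableSet {v : 𝒴 | v < y} ∧ MeasurableSet {v : 𝒴 | v ≤ y})
    (μ : Measure Ω) [IsProbabilityMeasure μ]
    (U : Ω → 𝒰) (hU : Measurable U) (X : Ω → 𝒳) (hX : Measurable X)
    (C : Ω → 𝒞) (hC : Measurable C)
    (f : 𝒳 → 𝒞 → 𝒰 → 𝒴) (hf : ∀ x c, Measurable (f x c))
    (c : 𝒞) (hc : 0 < μ {ω | C ω = c})
    (μc : Measure Ω) (hμc : μc = μ[|{ω | C ω = c}])
    (hexo : IndepFun U X μc)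
    (x₀ x₁ : 𝒳) (y : 𝒴)
    (hmono : μc {ω | f x₀ (C ω) (U ω) < y ∧ y ≤ f x₁ (C ω) (U ω)} = 0 ∨
             μc {ω | f x₁ (C ω) (U ω) < y ∧ y ≤ f x₀ (C ω) (U ω)} = 0)
    (h₀ : 0 < μc {ω | X ω = x₀}) (h₁ : 0 < μc {ω | X ω = x₁})
    (ρ : 𝒴 → 𝒳 → ℝ)
    (hρ : ∀ (y' : 𝒴) (x : 𝒳), ρ y' x =
      (μc {ω | f (X ω) (C ω) (U ω) < y' ∧ X ω = x}).toReal / (μc {ω | X ω = x}).toReal)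
    (hρ₀ : 0 < ρ y x₀) :
    (μc {ω | y ≤ f x₁ c (U ω) ∧ f (X ω) (C ω) (U ω) < y ∧ X ω = x₀}).toReal
        / (μc {ω | f (X ω) (C ω) (U ω) < y ∧ X ω = x₀}).toReal =
      max ((ρ y x₀ - ρ y x₁) / ρ y x₀) 0 := by
  classical
  have hms : MeasurableSet {ω | C ω = c} := hC (measurableSet_singleton c)
  haveI hμc_prob : IsProbabilityMeasure μc := by
    rw [hμc]; exact cond_isProbabilityMeasure hc.ne'
  have hCc : ∀ᵐ ω ∂μc, C ω = c := by
    rw [hμc, Filter.eventually_iff, mem_ae_iff]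
    rw [cond_apply hms]
    convert mul_zero _
    rw [← measure_empty (μ := μ)]
    congr 1
    ext ω
    simp only [Set.mem_inter_iff, Set.mem_setOf_eq, Set.mem_compl_iff, Set.mem_empty_iff_false,
      iff_false, not_and]
    exact fun h h2 => h2 h
  -- sets in 𝒰
  set A : Set 𝒰 := f x₀ c ⁻¹' {v | v < y} with hA_def
  set B : Set 𝒰 := f x₁ c ⁻¹' {v | v < y} with hB_def
  have hA : MeasurableSet A := hf x₀ c (hRays y).1
  have hB : MeasurableSet B := hf x₁ c (hRays y).1
  have hAmem : ∀ u, u ∈ A ↔ f x₀ c u < y := fun u => Iff.rfl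
  have hBmem : ∀ u, u ∈ B ↔ f x₁ c u < y := fun u => Iff.rfl
  -- independence consequences
  have hind : ∀ (S : Set 𝒰), MeasurableSet S → ∀ x : 𝒳,
      μc (U ⁻¹' S ∩ X ⁻¹' {x}) = μc (U ⁻¹' S) * μc (X ⁻¹' {x}) := fun S hS x =>
    hexo.measure_inter_preimage_eq_mul S {x} hS (measurableSet_singleton x)
  have hX0 : (X ⁻¹' {x₀} : Set Ω) = {ω | X ω = x₀} := by ext ω; simp
  have hX1 : (X ⁻¹' {x₁} : Set Ω) = {ω | X ω = x₁} := by ext ω; simp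
  -- measure rewrites
  have h0eq : μc {ω | f (X ω) (C ω) (U ω) < y ∧ X ω = x₀}
      = μc (U ⁻¹' A) * μc {ω | X ω = x₀} := by
    rw [← hX0, ← hind A hA x₀]
    apply measure_congr
    filter_upwards [hCc] with ω hω
    have key : (f (X ω) (C ω) (U ω) < y ∧ X ω = x₀) ↔ (U ω ∈ A ∧ X ω = x₀) := by
      rw [hAmem]
      constructor
      · rintro ⟨h1, h2⟩; rw [h2, hω] at h1; exact ⟨h1, h2⟩
      · rintro ⟨h1, h2⟩; refine ⟨?_, h2⟩; rw [h2, hω]; exact h1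
    exact eq_iff_iff.mpr key
  have h1eq : μc {ω | f (X ω) (C ω) (U ω) < y ∧ X ω = x₁}
      = μc (U ⁻¹' B) * μc {ω | X ω = x₁} := by
    rw [← hX1, ← hind B hB x₁]
    apply measure_congr
    filter_upwards [hCc] with ω hω
    have key : (f (X ω) (C ω) (U ω) < y ∧ X ω = x₁) ↔ (U ω ∈ B ∧ X ω = x₁) := by
      rw [hBmem]
      constructor
      · rintro ⟨h1, h2⟩; rw [h2, hω] at h1; exact ⟨h1, h2⟩
      · rintro ⟨h1, h2⟩; refine ⟨?_, h2⟩; rw [h2, hω]; exact h1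
    exact eq_iff_iff.mpr key
  have hnumeq : μc {ω | y ≤ f x₁ c (U ω) ∧ f (X ω) (C ω) (U ω) < y ∧ X ω = x₀}
      = μc (U ⁻¹' (A \ B)) * μc {ω | X ω = x₀} := by
    rw [← hX0, ← hind (A \ B) (hA.diff hB) x₀]
    apply measure_congr
    filter_upwards [hCc] with ω hω
    have key : (y ≤ f x₁ c (U ω) ∧ f (X ω) (C ω) (U ω) < y ∧ X ω = x₀) ↔
        (U ω ∈ A \ B ∧ X ω = x₀) := by
      rw [Set.mem_diff, hAmem, hBmem, not_lt]
      constructor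
      · rintro ⟨h1, h2, h3⟩; rw [h3, hω] at h2; exact ⟨⟨h2, h1⟩, h3⟩
      · rintro ⟨⟨h2, h1⟩, h3⟩; refine ⟨h1, ?_, h3⟩; rw [h3, hω]; exact h2
    exact eq_iff_iff.mpr key
  -- monotonicity in terms of A, B
  have hmono' : μc (U ⁻¹' (A \ B)) = 0 ∨ μc (U ⁻¹' (B \ A)) = 0 := by
    rcases hmono with h | h
    · left
      rw [← h]
      apply measure_congr
      filter_upwards [hCc] with ω hω
      have key : U ω ∈ A \ B ↔ (f x₀ (C ω) (U ω) < y ∧ y ≤ f x₁ (C ω) (U ω)) := by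
        rw [Set.mem_diff, hAmem, hBmem, not_lt, hω]
      exact eq_iff_iff.mpr key
    · right
      rw [← h]
      apply measure_congr
      filter_upwards [hCc] with ω hω
      have key : U ω ∈ B \ A ↔ (f x₁ (C ω) (U ω) < y ∧ y ≤ f x₀ (C ω) (U ω)) := by
        rw [Set.mem_diff, hBmem, hAmem, not_lt, hω]
      exact eq_iff_iff.mpr key
  -- decompositions
  have hAdec : μc (U ⁻¹' (A ∩ B)) + μc (U ⁻¹' (A \ B)) = μc (U ⁻¹' A) := by
    rw [Set.preimage_inter, Set.preimage_diff]
    exact measure_inter_add_diff _ (hU hB)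
  have hBdec : μc (U ⁻¹' (B ∩ A)) + μc (U ⁻¹' (B \ A)) = μc (U ⁻¹' B) := by
    rw [Set.preimage_inter, Set.preimage_diff]
    exact measure_inter_add_diff _ (hU hA)
  -- real numbers
  set m0 : ℝ := (μc {ω | X ω = x₀}).toReal with hm0
  set m1 : ℝ := (μc {ω | X ω = x₁}).toReal with hm1
  have hm0pos : 0 < m0 := ENNReal.toReal_pos h₀.ne' (measure_ne_top _ _)
  have hm1pos : 0 < m1 := ENNReal.toReal_pos h₁.ne' (measure_ne_top _ _)
  set a : ℝ := (μc (U ⁻¹' A)).toReal with ha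
  set b : ℝ := (μc (U ⁻¹' B)).toReal with hb
  set d : ℝ := (μc (U ⁻¹' (A \ B))).toReal with hd
  set e : ℝ := (μc (U ⁻¹' (B \ A))).toReal with he
  set p : ℝ := (μc (U ⁻¹' (A ∩ B))).toReal with hp
  have hpe : (μc (U ⁻¹' (B ∩ A))).toReal = p := by rw [hp, Set.inter_comm B A]
  have hane : a = p + d := by
    rw [ha, hp, hd, ← ENNReal.toReal_add (measure_ne_top _ _) (measure_ne_top _ _), hAdec]
  have hbne : b = p + e := by
    rw [hb, he, ← hpe, ← ENNReal.toReal_add (measure_ne_top _ _) (measure_ne_top _ _), hBdec]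
  have hdnn : 0 ≤ d := ENNReal.toReal_nonneg
  have henn : 0 ≤ e := ENNReal.toReal_nonneg
  have hpnn : 0 ≤ p := ENNReal.toReal_nonneg
  -- ρ values
  have hρ0 : ρ y x₀ = a := by
    rw [hρ, h0eq, ENNReal.toReal_mul, ← hm0, ← ha, mul_div_assoc, div_self hm0pos.ne', mul_one]
  have hρ1 : ρ y x₁ = b := by
    rw [hρ, h1eq, ENNReal.toReal_mul, ← hm1, ← hb, mul_div_assoc, div_self hm1pos.ne', mul_one]
  have hapos : 0 < a := hρ0 ▸ hρ₀
  rw [hnumeq, h0eq, ENNReal.toReal_mul, ENNReal.toReal_mul, ← hm0, ← hd, ← ha, hρ0, hρ1,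
    mul_div_mul_right _ _ hm0pos.ne']
  rcases hmono' with h | h
  · have hd0 : d = 0 := by rw [hd, h]; simp
    have : a - b ≤ 0 := by rw [hane, hbne, hd0]; linarith
    rw [hd0, zero_div, max_eq_right]
    exact div_nonpos_of_nonpos_of_nonneg this hapos.le
  · have he0 : e = 0 := by rw [he, h]; simp
    have hab : a - b = d := by rw [hane, hbne, he0]; ring
    rw [hab, max_eq_left (div_nonneg hdnn hapos.le)]
end

section
/- Identification of conditional PNS with positive-probability evidence (Theorem 'Identification of conditional PNS with evidence', case A): In the vector potential-outcomes model with covariates, assume conditional exogeneity given C = c (U and X independent under μ_c), assume conditional almost-sure monotonicity of the structural function over U, assume μ_c {X = x₀} > 0, μ_c {X = x₁} > 0 and μ_c {X = x'} > 0, and assume the evidence has positive probability: μ_c {ω | Y ω = y' ∧ X ω = x'} > 0 (equivalently ρ(y';x',c) < ρᵒ(y';x',c)). Then the conditional PNS with evidence (Y = y', X = x', C = c), namely μ_c.real {ω | f x₀ c (U ω) ≺ y ∧ y ≼ f x₁ c (U ω) ∧ Y ω = y' ∧ X ω = x'} / μ_c.real {ω | Y ω = y' ∧ X ω = x'}, equals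 max ((min (ρ(y;x₀,c)) (ρᵒ(y';x',c)) − max (ρ(y;x₁,c)) (ρ(y';x',c))) / (ρᵒ(y';x',c) − ρ(y';x',c))) 0. -/
open MeasureTheory ProbabilityTheory Set
open scoped ENNReal

private lemma chain_helper {α : Type*} (r : α → α → Prop) (hr : ∀ a b, r a b ∨ r b a)
    (S T₁ T₂ : Set α)
    (h1 : ∀ u ∈ T₁ ∩ S, ∀ v ∈ S, r v u → v ∈ T₁)
    (h2 : ∀ u ∈ T₂ ∩ S, ∀ v ∈ S, r v u → v ∈ T₂) :
    T₁ ∩ S ⊆ T₂ ∩ S ∨ T₂ ∩ S ⊆ T₁ ∩ S := by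
  by_contra hcon
  push_neg at hcon
  obtain ⟨hc₁, hc₂⟩ := hcon
  obtain ⟨u₁, hu₁, hu₁'⟩ := not_subset.1 hc₁
  obtain ⟨u₂, hu₂, hu₂'⟩ := not_subset.1 hc₂
  rcases hr u₁ u₂ with h | h
  · exact hu₁' ⟨h2 u₂ hu₂ u₁ hu₁.2 h, hu₁.2⟩
  · exact hu₂' ⟨h1 u₁ hu₁ u₂ hu₂.2 h, hu₂.2⟩

private lemma comparable_of_mono {𝒰 𝒴 : Type*} [LinearOrder 𝒰] [Preorder 𝒴]
    (S : Set 𝒰) (g₁ g₂ : 𝒰 → 𝒴) (R₁ R₂ : Set 𝒴)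
    (hR₁ : ∀ ⦃a b : 𝒴⦄, a ≤ b → b ∈ R₁ → a ∈ R₁)
    (hR₂ : ∀ ⦃a b : 𝒴⦄, a ≤ b → b ∈ R₂ → a ∈ R₂)
    (hm : (MonotoneOn g₁ S ∧ MonotoneOn g₂ S) ∨ (AntitoneOn g₁ S ∧ AntitoneOn g₂ S)) :
    g₁ ⁻¹' R₁ ∩ S ⊆ g₂ ⁻¹' R₂ ∩ S ∨ g₂ ⁻¹' R₂ ∩ S ⊆ g₁ ⁻¹' R₁ ∩ S := by
  rcases hm with ⟨hm₁, hm₂⟩ | ⟨hm₁, hm₂⟩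
  · exact chain_helper (· ≤ ·) le_total S _ _
      (fun u hu v hv hvu => hR₁ (hm₁ hv hu.2 hvu) hu.1)
      (fun u hu v hv hvu => hR₂ (hm₂ hv hu.2 hvu) hu.1)
  · exact chain_helper (fun a b => b ≤ a) (fun a b => le_total b a) S _ _
      (fun u hu v hv hvu => hR₁ (hm₁ hu.2 hv hvu) hu.1)
      (fun u hu v hv hvu => hR₂ (hm₂ hu.2 hv hvu) hu.1)

private lemma toReal_inter_comparable {α : Type*} [MeasurableSpace α] (ν : Measure α)
    [IsFiniteMeasure ν] {P Q : Set α} (h : P ⊆ Q ∨ Q ⊆ P) :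
    (ν (P ∩ Q)).toReal = min (ν P).toReal (ν Q).toReal := by
  rcases h with h | h
  · rw [inter_eq_left.2 h,
      min_eq_left (ENNReal.toReal_mono (measure_ne_top ν Q) (measure_mono h))]
  · rw [inter_eq_right.2 h,
      min_eq_right (ENNReal.toReal_mono (measure_ne_top ν P) (measure_mono h))]

private lemma toReal_union_comparable {α : Type*} [MeasurableSpace α] (ν : Measure α)
    [IsFiniteMeasure ν] {P Q : Set α} (h : P ⊆ Q ∨ Q ⊆ P) :
    (ν (P ∪ Q)).toReal = max (ν P).toReal (ν Q).toReal := by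
  rcases h with h | h
  · rw [union_eq_right.2 h,
      max_eq_right (ENNReal.toReal_mono (measure_ne_top ν Q) (measure_mono h))]
  · rw [union_eq_left.2 h,
      max_eq_left (ENNReal.toReal_mono (measure_ne_top ν P) (measure_mono h))]

private lemma toReal_diff_comparable {α : Type*} [MeasurableSpace α] (ν : Measure α)
    [IsFiniteMeasure ν] {P Q : Set α} (hQ : MeasurableSet Q) (h : P ⊆ Q ∨ Q ⊆ P) :
    (ν (P \ Q)).toReal = max ((ν P).toReal - (ν Q).toReal) 0 := by
  rcases h with h | h
  · rw [diff_eq_empty.2 h, measure_empty,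
      max_eq_right (sub_nonpos.2 (ENNReal.toReal_mono (measure_ne_top ν Q) (measure_mono h)))]
    simp
  · rw [measure_diff h hQ.nullMeasurableSet (measure_ne_top ν Q),
      ENNReal.toReal_sub_of_le (measure_mono h) (measure_ne_top ν P),
      max_eq_left (sub_nonneg.2 (ENNReal.toReal_mono (measure_ne_top ν P) (measure_mono h)))]

private lemma final_arith {α : Type*} [MeasurableSpace α] (ν : Measure α) [IsFiniteMeasure ν]
    (A B L M : Set α) (mB : MeasurableSet B) (mL : MeasurableSet L)
    (hAB : A ⊆ B ∨ B ⊆ A) (hAL : A ⊆ L ∨ L ⊆ A) (hAM : A ⊆ M ∨ M ⊆ A)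
    (hBL : B ⊆ L ∨ L ⊆ B) (hBM : B ⊆ M ∨ M ⊆ B) (hLM : L ⊆ M)
    (hpos : ν (M \ L) ≠ 0) (px : ℝ≥0∞) (hpx : px ≠ 0) (hpxt : px ≠ ∞) :
    (ν ((A ∩ M) \ (B ∪ L)) * px).toReal / (ν (M \ L) * px).toReal =
      max ((min (ν A).toReal (ν M).toReal - max (ν B).toReal (ν L).toReal)
            / ((ν M).toReal - (ν L).toReal)) 0 := by
  have hd : (ν (M \ L)).toReal = (ν M).toReal - (ν L).toReal := by
    rw [measure_diff hLM mL.nullMeasurableSet (measure_ne_top ν L),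
      ENNReal.toReal_sub_of_le (measure_mono hLM) (measure_ne_top ν M)]
  have hdpos : 0 < (ν M).toReal - (ν L).toReal := by
    rw [← hd]; exact ENNReal.toReal_pos hpos (measure_ne_top _ _)
  have hPQ : A ∩ M ⊆ B ∪ L ∨ B ∪ L ⊆ A ∩ M := by
    rcases hAB with h | h
    · exact Or.inl fun u hu => Or.inl (h hu.1)
    rcases hAL with h' | h'
    · exact Or.inl fun u hu => Or.inr (h' hu.1)
    rcases hBM with h'' | h''
    · exact Or.inr fun u hu =>
        ⟨hu.elim (fun hb => h hb) (fun hl => h' hl),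
         hu.elim (fun hb => h'' hb) (fun hl => hLM hl)⟩
    · exact Or.inl fun u hu => Or.inl (h'' hu.2)
  have hpxr : px.toReal ≠ 0 := ENNReal.toReal_ne_zero.2 ⟨hpx, hpxt⟩
  rw [ENNReal.toReal_mul, ENNReal.toReal_mul, mul_div_mul_right _ _ hpxr,
    toReal_diff_comparable ν (mB.union mL) hPQ, toReal_inter_comparable ν hAM,
    toReal_union_comparable ν hBL, hd]
  rcases le_total (min (ν A).toReal (ν M).toReal - max (ν B).toReal (ν L).toReal) 0 with h | h
  · rw [max_eq_right h, zero_div,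
      max_eq_right (div_nonpos_iff.2 (Or.inr ⟨h, hdpos.le⟩))]
  · rw [max_eq_left h, max_eq_left (div_nonneg h hdpos.le)]

/-- Identification of conditional PNS with positive-probability evidence
`(Y = y', X = x', C = c)` (case A of the theorem). -/
theorem identification_of_conditional_PNS_with_evidence
    {Ω 𝒳 𝒞 𝒰 𝒴 : Type*} [MeasurableSpace Ω]
    [MeasurableSpace 𝒳] [MeasurableSingletonClass 𝒳]
    [MeasurableSpace 𝒞] [MeasurableSingletonClass 𝒞]
    [LinearOrder 𝒰] [MeasurableSpace 𝒰] [LinearOrder 𝒴] [MeasurableSpace 𝒴]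
    (hRays : ∀ y : 𝒴, MeasurableSet {v : 𝒴 | v < y} ∧ MeasurableSet {v : 𝒴 | v ≤ y})
    (μ : Measure Ω) [IsProbabilityMeasure μ]
    (U : Ω → 𝒰) (hU : Measurable U) (X : Ω → 𝒳) (hX : Measurable X)
    (C : Ω → 𝒞) (hC : Measurable C)
    (f : 𝒳 → 𝒞 → 𝒰 → 𝒴) (hf : ∀ x c, Measurable (f x c))
    (c : 𝒞) (hc : 0 < μ {ω | C ω = c})
    (μc : Measure Ω) (hμc : μc = μ[|{ω | C ω = c}])
    (hexo : IndepFun U X μc)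
    (hmono : ∃ S : Set 𝒰, MeasurableSet S ∧ μc {ω | U ω ∉ S} = 0 ∧
      ((∀ x, MonotoneOn (f x c) S) ∨ (∀ x, AntitoneOn (f x c) S)))
    (x₀ x₁ x' : 𝒳) (y y' : 𝒴)
    (h₀ : 0 < μc {ω | X ω = x₀}) (h₁ : 0 < μc {ω | X ω = x₁})
    (h' : 0 < μc {ω | X ω = x'})
    (hev : 0 < μc {ω | f (X ω) (C ω) (U ω) = y' ∧ X ω = x'})
    (ρ : 𝒴 → 𝒳 → ℝ)
    (hρ : ∀ (z : 𝒴) (x : 𝒳), ρ z x =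
      (μc {ω | f (X ω) (C ω) (U ω) < z ∧ X ω = x}).toReal / (μc {ω | X ω = x}).toReal)
    (ρo : 𝒴 → 𝒳 → ℝ)
    (hρo : ∀ (z : 𝒴) (x : 𝒳), ρo z x =
      (μc {ω | f (X ω) (C ω) (U ω) ≤ z ∧ X ω = x}).toReal / (μc {ω | X ω = x}).toReal) :
    (μc {ω | f x₀ c (U ω) < y ∧ y ≤ f x₁ c (U ω)
            ∧ f (X ω) (C ω) (U ω) = y' ∧ X ω = x'}).toReal
        / (μc {ω | f (X ω) (C ω) (U ω) = y' ∧ X ω = x'}).toReal =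
      max ((min (ρ y x₀) (ρo y' x') - max (ρ y x₁) (ρ y' x'))
            / (ρo y' x' - ρ y' x')) 0 := by
  classical
  obtain ⟨S, hSmeas, hSnull, hm⟩ := hmono
  have hCmeas : MeasurableSet {ω | C ω = c} := hC (measurableSet_singleton c)
  have hprob : IsProbabilityMeasure μc := by
    rw [hμc]; exact cond_isProbabilityMeasure hc.ne'
  have hCae : ∀ᵐ ω ∂μc, C ω = c := by
    have h0 : μc {ω | C ω = c}ᶜ = 0 := by
      rw [hμc, cond_apply hCmeas, inter_compl_self, measure_empty, mul_zero]
    rw [ae_iff]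
    simpa [compl_setOf] using h0
  -- the pushforward measure on 𝒰
  set ν : Measure 𝒰 := μc.map U with hν
  have hνprob : IsProbabilityMeasure ν := Measure.isProbabilityMeasure_map hU.aemeasurable
  have hνapp : ∀ {T : Set 𝒰}, MeasurableSet T → ν T = μc (U ⁻¹' T) :=
    fun hT => Measure.map_apply hU hT
  have hνS : ν Sᶜ = 0 := by
    rw [hνapp hSmeas.compl]; exact hSnull
  have hνinterS : ∀ (T : Set 𝒰), ν (T ∩ S) = ν T := fun T =>
    measure_inter_conull hνS
  -- measurability of the ray preimages
  have mTA : MeasurableSet ((f x₀ c) ⁻¹' {v | v < y}) := hf x₀ c (hRays y).1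
  have mTB : MeasurableSet ((f x₁ c) ⁻¹' {v | v < y}) := hf x₁ c (hRays y).1
  have mTL : MeasurableSet ((f x' c) ⁻¹' {v | v < y'}) := hf x' c (hRays y').1
  have mTM : MeasurableSet ((f x' c) ⁻¹' {v | v ≤ y'}) := hf x' c (hRays y').2
  have mRE : MeasurableSet ({v : 𝒴 | v ≤ y'} \ {v | v < y'}) := (hRays y').2.diff (hRays y').1
  -- independence computation
  have hind := indepFun_iff_measure_inter_preimage_eq_mul.1 hexo
  have hXc : ∀ (T₀ : Set 𝒰), MeasurableSet T₀ → ∀ (x : 𝒳) (R : Set 𝒴), MeasurableSet R →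
      μc {ω | U ω ∈ T₀ ∧ f (X ω) (C ω) (U ω) ∈ R ∧ X ω = x}
        = ν (T₀ ∩ (f x c) ⁻¹' R) * μc {ω | X ω = x} := by
    intro T₀ hT₀ x R hR
    have hset : {ω | U ω ∈ T₀ ∧ f (X ω) (C ω) (U ω) ∈ R ∧ X ω = x}
        =ᵐ[μc] ((U ⁻¹' (T₀ ∩ (f x c) ⁻¹' R)) ∩ X ⁻¹' {x} : Set Ω) := by
      rw [Filter.eventuallyEq_set]
      filter_upwards [hCae] with ω hω
      simp only [mem_setOf_eq, mem_inter_iff, mem_preimage, mem_singleton_iff]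
      constructor
      · rintro ⟨h1, h2, h3⟩
        rw [h3, hω] at h2
        exact ⟨⟨h1, h2⟩, h3⟩
      · rintro ⟨⟨h1, h2⟩, h3⟩
        refine ⟨h1, ?_, h3⟩
        rw [h3, hω]; exact h2
    rw [measure_congr hset, hind _ _ (hT₀.inter (hf x c hR)) (measurableSet_singleton x),
      hνapp (hT₀.inter (hf x c hR))]
    rfl
  have hXc1 : ∀ (x : 𝒳) (R : Set 𝒴), MeasurableSet R →
      μc {ω | f (X ω) (C ω) (U ω) ∈ R ∧ X ω = x}
        = ν ((f x c) ⁻¹' R) * μc {ω | X ω = x} := by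
    intro x R hR
    have := hXc univ MeasurableSet.univ x R hR
    simpa using this
  have hval : ∀ (x : 𝒳) (R : Set 𝒴), MeasurableSet R → 0 < μc {ω | X ω = x} →
      (μc {ω | f (X ω) (C ω) (U ω) ∈ R ∧ X ω = x}).toReal / (μc {ω | X ω = x}).toReal
        = (ν ((f x c) ⁻¹' R)).toReal := by
    intro x R hR hx
    rw [hXc1 x R hR, ENNReal.toReal_mul, mul_div_assoc,
      div_self (ENNReal.toReal_pos hx.ne' (measure_ne_top _ _)).ne', mul_one]
  -- the four observational quantities
  have hρa : ρ y x₀ = (ν ((f x₀ c) ⁻¹' {v | v < y} ∩ S)).toReal := by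
    rw [hρ, hνinterS]
    exact hval x₀ {v | v < y} (hRays y).1 h₀
  have hρb : ρ y x₁ = (ν ((f x₁ c) ⁻¹' {v | v < y} ∩ S)).toReal := by
    rw [hρ, hνinterS]
    exact hval x₁ {v | v < y} (hRays y).1 h₁
  have hρl : ρ y' x' = (ν ((f x' c) ⁻¹' {v | v < y'} ∩ S)).toReal := by
    rw [hρ, hνinterS]
    exact hval x' {v | v < y'} (hRays y').1 h'
  have hρm : ρo y' x' = (ν ((f x' c) ⁻¹' {v | v ≤ y'} ∩ S)).toReal := by
    rw [hρo, hνinterS]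
    exact hval x' {v | v ≤ y'} (hRays y').2 h'
  -- singleton ray
  have hsing : {v : 𝒴 | v = y'} = {v | v ≤ y'} \ {v | v < y'} := by
    ext v; simp [not_lt, le_antisymm_iff]
  -- denominator
  have hE : μc {ω | f (X ω) (C ω) (U ω) = y' ∧ X ω = x'}
      = ν (((f x' c) ⁻¹' {v | v ≤ y'} ∩ S) \ ((f x' c) ⁻¹' {v | v < y'} ∩ S))
          * μc {ω | X ω = x'} := by
    have h1 : {ω | f (X ω) (C ω) (U ω) = y' ∧ X ω = x'}
        = {ω | f (X ω) (C ω) (U ω) ∈ ({v : 𝒴 | v ≤ y'} \ {v | v < y'}) ∧ X ω = x'} := by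
      ext ω; simp [mem_diff, not_lt, le_antisymm_iff]
    have h2 : ((f x' c) ⁻¹' {v | v ≤ y'} ∩ S) \ ((f x' c) ⁻¹' {v | v < y'} ∩ S)
        = ((f x' c) ⁻¹' ({v : 𝒴 | v ≤ y'} \ {v | v < y'})) ∩ S := by
      ext u
      simp only [mem_diff, mem_inter_iff, mem_preimage, mem_setOf_eq]
      tauto
    rw [h1, hXc1 x' _ mRE, h2, hνinterS]
  -- numerator
  have hN : μc {ω | f x₀ c (U ω) < y ∧ y ≤ f x₁ c (U ω)
        ∧ f (X ω) (C ω) (U ω) = y' ∧ X ω = x'}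
      = ν ((((f x₀ c) ⁻¹' {v | v < y} ∩ S) ∩ ((f x' c) ⁻¹' {v | v ≤ y'} ∩ S))
            \ (((f x₁ c) ⁻¹' {v | v < y} ∩ S) ∪ ((f x' c) ⁻¹' {v | v < y'} ∩ S)))
          * μc {ω | X ω = x'} := by
    have h1 : {ω | f x₀ c (U ω) < y ∧ y ≤ f x₁ c (U ω)
          ∧ f (X ω) (C ω) (U ω) = y' ∧ X ω = x'}
        = {ω | U ω ∈ ((f x₀ c) ⁻¹' {v | v < y} ∩ ((f x₁ c) ⁻¹' {v | v < y})ᶜ)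
            ∧ f (X ω) (C ω) (U ω) ∈ ({v : 𝒴 | v ≤ y'} \ {v | v < y'}) ∧ X ω = x'} := by
      ext ω
      simp only [mem_setOf_eq, mem_inter_iff, mem_compl_iff, mem_preimage, mem_diff,
        not_lt, le_antisymm_iff]
      tauto
    have h2 : (((f x₀ c) ⁻¹' {v | v < y} ∩ ((f x₁ c) ⁻¹' {v | v < y})ᶜ)
          ∩ (f x' c) ⁻¹' ({v : 𝒴 | v ≤ y'} \ {v | v < y'})) ∩ S
        = (((f x₀ c) ⁻¹' {v | v < y} ∩ S) ∩ ((f x' c) ⁻¹' {v | v ≤ y'} ∩ S))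
            \ (((f x₁ c) ⁻¹' {v | v < y} ∩ S) ∪ ((f x' c) ⁻¹' {v | v < y'} ∩ S)) := by
      ext u
      simp only [mem_diff, mem_inter_iff, mem_preimage, mem_setOf_eq, mem_compl_iff,
        mem_union]
      tauto
    rw [h1, hXc _ (mTA.inter mTB.compl) x' _ mRE, ← hνinterS
      (((f x₀ c) ⁻¹' {v | v < y} ∩ ((f x₁ c) ⁻¹' {v | v < y})ᶜ)
        ∩ (f x' c) ⁻¹' ({v : 𝒴 | v ≤ y'} \ {v | v < y'})), h2]
  -- comparability of the ray-preimage sets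
  have hray_lt : ∀ z : 𝒴, ∀ ⦃a b : 𝒴⦄, a ≤ b → b ∈ {v : 𝒴 | v < z} → a ∈ {v : 𝒴 | v < z} :=
    fun z a b hab hb => lt_of_le_of_lt hab hb
  have hray_le : ∀ z : 𝒴, ∀ ⦃a b : 𝒴⦄, a ≤ b → b ∈ {v : 𝒴 | v ≤ z} → a ∈ {v : 𝒴 | v ≤ z} :=
    fun z a b hab hb => le_trans hab hb
  have hm2 : ∀ xa xb : 𝒳, (MonotoneOn (f xa c) S ∧ MonotoneOn (f xb c) S)
      ∨ (AntitoneOn (f xa c) S ∧ AntitoneOn (f xb c) S) :=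
    fun xa xb => hm.imp (fun h => ⟨h xa, h xb⟩) (fun h => ⟨h xa, h xb⟩)
  have hAB := comparable_of_mono S (f x₀ c) (f x₁ c) {v | v < y} {v | v < y}
    (hray_lt y) (hray_lt y) (hm2 x₀ x₁)
  have hAL := comparable_of_mono S (f x₀ c) (f x' c) {v | v < y} {v | v < y'}
    (hray_lt y) (hray_lt y') (hm2 x₀ x')
  have hAM := comparable_of_mono S (f x₀ c) (f x' c) {v | v < y} {v | v ≤ y'}
    (hray_lt y) (hray_le y') (hm2 x₀ x')
  have hBL := comparable_of_mono S (f x₁ c) (f x' c) {v | v < y} {v | v < y'}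
    (hray_lt y) (hray_lt y') (hm2 x₁ x')
  have hBM := comparable_of_mono S (f x₁ c) (f x' c) {v | v < y} {v | v ≤ y'}
    (hray_lt y) (hray_le y') (hm2 x₁ x')
  have hLM : (f x' c) ⁻¹' {v | v < y'} ∩ S ⊆ (f x' c) ⁻¹' {v | v ≤ y'} ∩ S :=
    fun u hu => ⟨le_of_lt hu.1, hu.2⟩
  -- positivity of the evidence
  have hpos : ν (((f x' c) ⁻¹' {v | v ≤ y'} ∩ S) \ ((f x' c) ⁻¹' {v | v < y'} ∩ S)) ≠ 0 := by
    intro h0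
    rw [hE, h0, zero_mul] at hev
    exact lt_irrefl 0 hev
  -- assemble
  rw [hρa, hρb, hρl, hρm, hN, hE]
  exact final_arith ν _ _ _ _ (mTB.inter hSmeas) (mTL.inter hSmeas)
    hAB hAL hAM hBL hBM hLM hpos _ h'.ne' (measure_ne_top _ _)
end

section
/- Pointwise form of the Corollary on conditional PNS with evidence under strict monotonicity: In the strict-monotonicity evidence setup, for every latent value u₀ ∈ ℝ, all treatments x₀, x₁, x' ∈ 𝒳 and every threshold y ∈ 𝒴, writing y' := f x' u₀ (so that u₀ is compatible with the evidence (Y = y', X = x', C = c)), the counterfactual event holds exactly when the CDF condition holds: (f x₀ u₀ ≺ y ∧ y ≼ f x₁ u₀) ↔ (ρ(y;x₁) ≤ ρ(y';x') ∧ ρ(y';x') < ρ(y;x₀)). In other words, given such evidence the conditional PNS with evidence equals the indicator 𝕀(ρ(y;x₁,c) ≤ ρ(y';x',c) < ρ(y;x₀,c)). -/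
open MeasureTheory

private lemma key_mono {𝒳 𝒴 : Type*} [LinearOrder 𝒴] [TopologicalSpace 𝒴] [OrderTopology 𝒴]
    (ν : Measure ℝ) [IsProbabilityMeasure ν]
    (hsupp : ∀ a b : ℝ, a < b → 0 < ν (Set.Ioo a b))
    (f : 𝒳 → ℝ → 𝒴) (hcont : ∀ x, Continuous (f x))
    (hmono : ∀ x, StrictMono (f x)) (u₀ : ℝ) (x : 𝒳) (y : 𝒴) :
    y ≤ f x u₀ ↔ ν {u | f x u < y} ≤ ν (Set.Iio u₀) := by
  constructor
  · intro h
    apply measure_mono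
    intro u hu
    exact ((hmono x).lt_iff_lt).mp (lt_of_lt_of_le hu h)
  · intro h
    by_contra hy
    push_neg at hy
    -- f x u₀ < y, so u₀ ∈ open set S, get Iic t ⊆ S for some t > u₀
    have hopen : IsOpen {u | f x u < y} := (isOpen_Iio).preimage (hcont x)
    obtain ⟨ε, hε, hball⟩ := Metric.isOpen_iff.mp hopen u₀ hy
    have htmem : u₀ + ε / 2 ∈ {u | f x u < y} := by
      apply hball
      rw [Metric.mem_ball, Real.dist_eq]
      have he : u₀ + ε / 2 - u₀ = ε / 2 := by ring
      rw [he, abs_of_pos (by linarith)]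
      linarith
    set t := u₀ + ε / 2 with ht
    have hIic : Set.Iic t ⊆ {u | f x u < y} := fun u hu =>
      lt_of_le_of_lt ((hmono x).monotone hu) htmem
    have hunion : Set.Iio u₀ ∪ Set.Ioo u₀ t ⊆ Set.Iic t := by
      intro u hu
      rcases hu with hu | hu
      · exact le_of_lt (lt_of_lt_of_le (Set.mem_Iio.mp hu) (by rw [ht]; linarith))
      · exact le_of_lt hu.2
    have hdisj : Disjoint (Set.Iio u₀) (Set.Ioo u₀ t) := by
      rw [Set.disjoint_left]
      intro u hu hu'
      exact absurd hu'.1 (not_lt.mpr (le_of_lt hu))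
    have hmeas := measure_union hdisj measurableSet_Ioo (μ := ν)
    have hpos : 0 < ν (Set.Ioo u₀ t) := hsupp u₀ t (by rw [ht]; linarith)
    have hlt : ν (Set.Iio u₀) < ν (Set.Iio u₀ ∪ Set.Ioo u₀ t) := by
      rw [hmeas]
      exact ENNReal.lt_add_right (measure_ne_top ν _) (ne_of_gt hpos)
    have : ν (Set.Iio u₀) < ν {u | f x u < y} :=
      lt_of_lt_of_le hlt (measure_mono (hunion.trans hIic))
    exact absurd h (not_le.mpr this)

private lemma aux_mono {𝒳 𝒴 : Type*} [LinearOrder 𝒴] [TopologicalSpace 𝒴] [OrderTopology 𝒴]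
    (ν : Measure ℝ) [IsProbabilityMeasure ν]
    (hsupp : ∀ a b : ℝ, a < b → 0 < ν (Set.Ioo a b))
    (f : 𝒳 → ℝ → 𝒴) (hcont : ∀ x, Continuous (f x))
    (hmono : ∀ x, StrictMono (f x))
    (u₀ : ℝ) (x₀ x₁ x' : 𝒳) (y : 𝒴) :
    (f x₀ u₀ < y ∧ y ≤ f x₁ u₀) ↔
      (ν {u | f x₁ u < y} ≤ ν {u | f x' u < f x' u₀} ∧
        ν {u | f x' u < f x' u₀} < ν {u | f x₀ u < y}) := by
  have hA : {u | f x' u < f x' u₀} = Set.Iio u₀ := by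
    ext u; exact (hmono x').lt_iff_lt
  rw [hA, and_comm]
  have h₁ := key_mono ν hsupp f hcont hmono u₀ x₁ y
  have h₀ := key_mono ν hsupp f hcont hmono u₀ x₀ y
  constructor
  · rintro ⟨hy₁, hy₀⟩
    refine ⟨h₁.mp hy₁, ?_⟩
    rw [← not_le]
    intro hc
    exact absurd (h₀.mpr hc) (not_le.mpr hy₀)
  · rintro ⟨h1, h0⟩
    refine ⟨h₁.mpr h1, ?_⟩
    by_contra hc
    push_neg at hc
    exact absurd (h₀.mp hc) (not_le.mpr h0)

/-- Pointwise form of the corollary on conditional PNS with evidence under strict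
monotonicity: for a latent value `u₀` compatible with the evidence
`(Y = y', X = x', C = c)` (i.e. `y' = f x' u₀`), the counterfactual event
`f x₀ u₀ ≺ y ∧ y ≼ f x₁ u₀` holds iff `ρ(y;x₁) ≤ ρ(y';x') < ρ(y;x₀)`. -/
theorem pointwise_conditional_PNS_with_evidence_strict_monotonicity
    {𝒳 𝒴 : Type*} [LinearOrder 𝒴] [TopologicalSpace 𝒴] [OrderTopology 𝒴]
    (ν : Measure ℝ) [IsProbabilityMeasure ν]
    (hsupp : ∀ a b : ℝ, a < b → 0 < ν (Set.Ioo a b))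
    (f : 𝒳 → ℝ → 𝒴) (hcont : ∀ x, Continuous (f x))
    (hstrict : (∀ x, StrictMono (f x)) ∨ (∀ x, StrictAnti (f x)))
    (u₀ : ℝ) (x₀ x₁ x' : 𝒳) (y : 𝒴) :
    (f x₀ u₀ < y ∧ y ≤ f x₁ u₀) ↔
      (ν {u | f x₁ u < y} ≤ ν {u | f x' u < f x' u₀} ∧
        ν {u | f x' u < f x' u₀} < ν {u | f x₀ u < y}) := by
  rcases hstrict with hmono | hanti
  · exact aux_mono ν hsupp f hcont hmono u₀ x₀ x₁ x' y
  · -- reduce to the monotone case via u ↦ -u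
    set ν' : Measure ℝ := ν.map Neg.neg with hν'
    haveI : IsProbabilityMeasure ν' := Measure.isProbabilityMeasure_map measurable_neg.aemeasurable
    set g : 𝒳 → ℝ → 𝒴 := fun x u => f x (-u) with hg
    have hgcont : ∀ x, Continuous (g x) := fun x => (hcont x).comp continuous_neg
    have hgmono : ∀ x, StrictMono (g x) := fun x a b hab => (hanti x) (neg_lt_neg hab)
    have hsupp' : ∀ a b : ℝ, a < b → 0 < ν' (Set.Ioo a b) := by
      intro a b hab
      rw [hν', Measure.map_apply measurable_neg measurableSet_Ioo]
      have : Neg.neg ⁻¹' Set.Ioo a b = Set.Ioo (-b) (-a) := by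
        ext u
        simp only [Set.mem_preimage, Set.mem_Ioo]
        constructor <;> intro h <;> exact ⟨by linarith [h.1, h.2], by linarith [h.1, h.2]⟩
      rw [this]
      exact hsupp _ _ (by linarith)
    have hmap : ∀ (x : 𝒳) (z : 𝒴), ν' {u | g x u < z} = ν {u | f x u < z} := by
      intro x z
      have hms : MeasurableSet {u : ℝ | g x u < z} :=
        ((isOpen_Iio).preimage (hgcont x)).measurableSet
      rw [hν', Measure.map_apply measurable_neg hms]
      congr 1
      ext u; simp [hg]
    have key := aux_mono ν' hsupp' g hgcont hgmono (-u₀) x₀ x₁ x' y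
    have e : ∀ x : 𝒳, g x (-u₀) = f x u₀ := fun x => by simp [hg]
    rw [e x₀, e x₁, e x'] at key
    rw [hmap x₁ y, hmap x₀ y, hmap x' (f x' u₀)] at key
    exact key
end

section
/- Identification of conditional PNS with multi-hypothetical terms (Theorem 'Identification of conditional PNS with multi-hypothetical terms'): In the vector potential-outcomes model with covariates, let P ≥ 1, let x₀, x₁, …, x_P ∈ 𝒳 be treatments with μ_c {X = x_p} > 0 for every p ∈ {0, 1, …, P}, and let y₁, …, y_P ∈ 𝒴 be thresholds. Assume conditional exogeneity given C = c (U and X independent under μ_c) and conditional almost-sure monotonicity of the structural function over U. Then μ_c.real {ω | ∀ p ∈ {1, …, P}, f x_{p−1} c (U ω) ≺ y_p ∧ y_p ≼ f x_p c (U ω)} = max ((min over p ∈ {1,…,P} of ρ(y_p; x_{p−1}, c)) − (max over p ∈ {1,…,P} of ρ(y_p; x_p, c))) 0. -/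
/-!
Under monotonicity (or antitonicity) on `S`, each set `{u ∈ S | f x c u < y}` is an initial
(resp. final) segment of `S`, so all these sets form a chain under inclusion. Off a null set the
PNS event is `A \ B`, where `A` is the smallest of the sets for the pairs `(x_{p-1}, y_p)` and `B`
the largest of those for `(x_p, y_p)`, and a difference of comparable sets has measure
`max (μ A - μ B) 0`. Exogeneity identifies each `μ_c (U ∈ {u ∈ S | f x c u < y})` with `ρ(y;x,c)`:
on `{X = x}` the observed outcome is `f x c U`, and `U` is independent of `X`.
-/

open MeasureTheory ProbabilityTheory Set

section SublevelSets

variable {ι α β : Type*} [LinearOrder α] [LinearOrder β] {S : Set α} {g : ι → α → β}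

theorem isChain_range_sep_lt_of_monotoneOn (hg : ∀ i, MonotoneOn (g i) S) :
    IsChain (· ⊆ ·) (range fun q : ι × β => {u ∈ S | g q.1 u < q.2}) := by
  rintro _ ⟨⟨i, y⟩, rfl⟩ _ ⟨⟨j, z⟩, rfl⟩ -
  by_contra! h
  obtain ⟨⟨a, ⟨haS, hay⟩, ha⟩, ⟨b, ⟨hbS, hbz⟩, hb⟩⟩ := And.imp not_subset.mp not_subset.mp h
  rcases le_total a b with hab | hba
  · exact ha ⟨haS, (hg j haS hbS hab).trans_lt hbz⟩
  · exact hb ⟨hbS, (hg i hbS haS hba).trans_lt hay⟩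

theorem isChain_range_sep_lt_of_antitoneOn (hg : ∀ i, AntitoneOn (g i) S) :
    IsChain (· ⊆ ·) (range fun q : ι × β => {u ∈ S | g q.1 u < q.2}) :=
  isChain_range_sep_lt_of_monotoneOn (α := αᵒᵈ) fun i => (hg i).dual_left

end SublevelSets

theorem forall_lt_and_le_iff_mem_iInter_sdiff_iUnion {ι α β : Type*} [LinearOrder β]
    {S : Set α} {g h : ι → α → β} {y : ι → β} {u : α} (hu : u ∈ S) :
    (∀ i, g i u < y i ∧ y i ≤ h i u) ↔
      u ∈ (⋂ i, {v ∈ S | g i v < y i}) \ ⋃ i, {v ∈ S | h i v < y i} := by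
  simp [hu, forall_and]

section Chains

variable {ι α β : Type*}

theorem IsChain.range_preimage {A : ι → Set β} (h : IsChain (· ⊆ ·) (range A)) (U : α → β) :
    IsChain (· ⊆ ·) (range fun i => U ⁻¹' A i) := by
  rintro _ ⟨i, rfl⟩ _ ⟨j, rfl⟩ -
  exact (h.total (mem_range_self i) (mem_range_self j)).imp (preimage_mono ·) (preimage_mono ·)

variable [Finite ι] [Nonempty ι] {A : ι → Set α}

theorem IsChain.exists_iInter_eq (h : IsChain (· ⊆ ·) (range A)) : ∃ i, ⋂ j, A j = A i := by
  have h' : IsChain (· ⊇ ·) (range A) := h.symm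
  obtain ⟨i, hi⟩ := (directedOn_range.mp h'.directedOn).finite_le id
  exact ⟨i, (iInter_subset A i).antisymm (subset_iInter hi)⟩

theorem IsChain.exists_iUnion_eq (h : IsChain (· ⊆ ·) (range A)) : ∃ i, ⋃ j, A j = A i := by
  obtain ⟨i, hi⟩ := (directedOn_range.mp h.directedOn).finite_le id
  exact ⟨i, (iUnion_subset hi).antisymm (subset_iUnion A i)⟩

end Chains

section Measure

variable {Ω : Type*} [MeasurableSpace Ω] {μ : Measure Ω} [IsFiniteMeasure μ]

theorem measureReal_sdiff_eq_max_sub {s t : Set Ω} (ht : MeasurableSet t) (hst : s ⊆ t ∨ t ⊆ s) :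
    μ.real (s \ t) = max (μ.real s - μ.real t) 0 := by
  rcases hst with hst | hts
  · rw [sdiff_eq_empty.mpr hst, measureReal_empty,
      max_eq_right (sub_nonpos.mpr (measureReal_mono hst))]
  · rw [measureReal_sdiff hts ht, max_eq_left (sub_nonneg.mpr (measureReal_mono hts))]

theorem measureReal_iInter_sdiff_iUnion_of_isChain {ι : Type*} [Fintype ι] [Nonempty ι]
    {A B : ι → Set Ω} (hB : ∀ i, MeasurableSet (B i)) (hAB : IsChain (· ⊆ ·) (range A ∪ range B)) :
    μ.real ((⋂ i, A i) \ ⋃ i, B i) =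
      max (Finset.univ.inf' Finset.univ_nonempty (fun i => μ.real (A i))
        - Finset.univ.sup' Finset.univ_nonempty (fun i => μ.real (B i))) 0 := by
  obtain ⟨i, hi⟩ := (hAB.mono subset_union_left).exists_iInter_eq
  obtain ⟨j, hj⟩ := (hAB.mono subset_union_right).exists_iUnion_eq
  have hinf : Finset.univ.inf' Finset.univ_nonempty (fun k => μ.real (A k)) = μ.real (A i) :=
    (Finset.inf'_le _ (Finset.mem_univ i)).antisymm <|
      Finset.le_inf' _ _ fun k _ => measureReal_mono (hi ▸ iInter_subset A k)
  have hsup : Finset.univ.sup' Finset.univ_nonempty (fun k => μ.real (B k)) = μ.real (B j) :=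
    (Finset.sup'_le _ _ fun k _ => measureReal_mono (hj ▸ subset_iUnion B k)).antisymm <|
      Finset.le_sup' (fun k => μ.real (B k)) (Finset.mem_univ j)
  rw [hi, hj, hinf, hsup]
  exact measureReal_sdiff_eq_max_sub (hB j)
    (hAB.total (Or.inl (mem_range_self i)) (Or.inr (mem_range_self j)))

theorem ProbabilityTheory.IndepFun.measureReal_inter_preimage_div_eq {α β : Type*}
    [MeasurableSpace α] [MeasurableSpace β] {U : Ω → α} {X : Ω → β} (hUX : IndepFun U X μ)
    {s : Set α} {t : Set β}
    (hs : MeasurableSet s) (ht : MeasurableSet t) (hXt : μ (X ⁻¹' t) ≠ 0) :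
    μ.real (U ⁻¹' s ∩ X ⁻¹' t) / μ.real (X ⁻¹' t) = μ.real (U ⁻¹' s) := by
  rw [measureReal_def, hUX.measure_inter_preimage_eq_mul s t hs ht, ENNReal.toReal_mul,
    ← measureReal_def, ← measureReal_def, mul_div_cancel_right₀]
  exact (measureReal_ne_zero_iff).mpr hXt

end Measure

theorem ProbabilityTheory.IndepFun.observational_cdf_eq_measureReal {Ω 𝒳 𝒞 𝒰 𝒴 : Type*}
    [MeasurableSpace Ω] [MeasurableSpace 𝒳] [MeasurableSingletonClass 𝒳] [MeasurableSpace 𝒰] [LT 𝒴]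
    {μ : Measure Ω} [IsFiniteMeasure μ] {U : Ω → 𝒰} {X : Ω → 𝒳} {C : Ω → 𝒞}
    {f : 𝒳 → 𝒞 → 𝒰 → 𝒴} {c : 𝒞} {S : Set 𝒰} {x : 𝒳} {z : 𝒴} (hUX : IndepFun U X μ)
    (hC : ∀ᵐ ω ∂μ, C ω = c) (hS : ∀ᵐ ω ∂μ, U ω ∈ S)
    (hmeas : MeasurableSet {u ∈ S | f x c u < z}) (hx : μ {ω | X ω = x} ≠ 0) :
    (μ {ω | f (X ω) (C ω) (U ω) < z ∧ X ω = x}).toReal / (μ {ω | X ω = x}).toReal =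
      μ.real (U ⁻¹' {u ∈ S | f x c u < z}) := by
  have hevent : {ω | f (X ω) (C ω) (U ω) < z ∧ X ω = x}
      =ᵐ[μ] (U ⁻¹' {u ∈ S | f x c u < z} ∩ X ⁻¹' {x} : Set Ω) := by
    filter_upwards [hC, hS] with ω hCω hSω
    refine propext (and_congr_left fun hXω => ?_)
    rw [hCω, hXω]
    exact (and_iff_right hSω).symm
  rw [← measureReal_def, ← measureReal_def, measureReal_congr hevent]
  exact hUX.measureReal_inter_preimage_div_eq hmeas (measurableSet_singleton x) hx

theorem identification_of_conditional_PNS_multi_hypothetical_general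
    {Ω 𝒳 𝒞 𝒰 𝒴 : Type*} [MeasurableSpace Ω]
    [MeasurableSpace 𝒳] [MeasurableSingletonClass 𝒳]
    [MeasurableSpace 𝒞] [MeasurableSingletonClass 𝒞]
    [LinearOrder 𝒰] [MeasurableSpace 𝒰] [LinearOrder 𝒴] [MeasurableSpace 𝒴]
    (hRays : ∀ y : 𝒴, MeasurableSet {v : 𝒴 | v < y} ∧ MeasurableSet {v : 𝒴 | v ≤ y})
    (μ : Measure Ω)
    (U : Ω → 𝒰) (hU : Measurable U) (X : Ω → 𝒳)
    (C : Ω → 𝒞) (hC : Measurable C)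
    (f : 𝒳 → 𝒞 → 𝒰 → 𝒴) (hf : ∀ x c, Measurable (f x c))
    (c : 𝒞)
    (μc : Measure Ω) (hμc : μc = μ[|{ω | C ω = c}])
    (hexo : IndepFun U X μc)
    (hmono : ∃ S : Set 𝒰, MeasurableSet S ∧ μc {ω | U ω ∉ S} = 0 ∧
      ((∀ x, MonotoneOn (f x c) S) ∨ (∀ x, AntitoneOn (f x c) S)))
    (P : ℕ) (hP : 0 < P) (x : Fin (P + 1) → 𝒳) (ys : Fin P → 𝒴)
    (hx : ∀ p : Fin (P + 1), 0 < μc {ω | X ω = x p})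
    (ρ : 𝒴 → 𝒳 → ℝ)
    (hρ : ∀ (z : 𝒴) (x' : 𝒳), ρ z x' =
      (μc {ω | f (X ω) (C ω) (U ω) < z ∧ X ω = x'}).toReal
        / (μc {ω | X ω = x'}).toReal) :
    (μc {ω | ∀ p : Fin P,
          f (x p.castSucc) c (U ω) < ys p ∧ ys p ≤ f (x p.succ) c (U ω)}).toReal =
      max ((Finset.univ.inf' ⟨⟨0, hP⟩, Finset.mem_univ _⟩
              fun p : Fin P => ρ (ys p) (x p.castSucc))
          - (Finset.univ.sup' ⟨⟨0, hP⟩, Finset.mem_univ _⟩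
              fun p : Fin P => ρ (ys p) (x p.succ))) 0 := by
  obtain ⟨S, hSm, hSnull, hmono⟩ := hmono
  have : IsFiniteMeasure μc := hμc ▸ inferInstance
  have : Nonempty (Fin P) := ⟨⟨0, hP⟩⟩
  have hCc : ∀ᵐ ω ∂μc, C ω = c := hμc ▸ ae_cond_mem (hC (measurableSet_singleton c))
  have hUS : ∀ᵐ ω ∂μc, U ω ∈ S := ae_iff.mpr hSnull
  let L : 𝒳 × 𝒴 → Set Ω := fun q => U ⁻¹' {u ∈ S | f q.1 c u < q.2}
  have hLm (q : 𝒳 × 𝒴) : MeasurableSet {u ∈ S | f q.1 c u < q.2} :=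
    hSm.inter (hf q.1 c (hRays q.2).1)
  have hchain : IsChain (· ⊆ ·) (range L) :=
    (hmono.elim isChain_range_sep_lt_of_monotoneOn
      isChain_range_sep_lt_of_antitoneOn).range_preimage U
  have hρL (p : Fin (P + 1)) (z : 𝒴) : ρ z (x p) = μc.real (L (x p, z)) :=
    (hρ z (x p)).trans <| hexo.observational_cdf_eq_measureReal hCc hUS (hLm (x p, z)) (hx p).ne'
  have hPNS : {ω | ∀ p : Fin P, f (x p.castSucc) c (U ω) < ys p ∧ ys p ≤ f (x p.succ) c (U ω)}
      =ᵐ[μc] (⋂ p, L (x p.castSucc, ys p)) \ ⋃ p, L (x p.succ, ys p) := by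
    simp only [L, ← preimage_iInter, ← preimage_iUnion]
    filter_upwards [hUS] with ω hω using propext (forall_lt_and_le_iff_mem_iInter_sdiff_iUnion hω)
  simp only [hρL]
  rw [← measureReal_def, measureReal_congr hPNS]
  exact measureReal_iInter_sdiff_iUnion_of_isChain (fun p => hU (hLm _)) <| hchain.mono <|
    union_subset (range_subset_iff.2 fun p => mem_range_self _)
      (range_subset_iff.2 fun p => mem_range_self _)

/-- Identification of conditional PNS with multi-hypothetical terms: under conditional
exogeneity and conditional almost-sure monotonicity of the structural function over `U`,
`PNS(ȳ;x̄,c) = max (min_p ρ(y_p;x_{p−1},c) − max_p ρ(y_p;x_p,c)) 0`. -/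
theorem identification_of_conditional_PNS_multi_hypothetical
    {Ω 𝒳 𝒞 𝒰 𝒴 : Type*} [MeasurableSpace Ω]
    [MeasurableSpace 𝒳] [MeasurableSingletonClass 𝒳]
    [MeasurableSpace 𝒞] [MeasurableSingletonClass 𝒞]
    [LinearOrder 𝒰] [MeasurableSpace 𝒰] [LinearOrder 𝒴] [MeasurableSpace 𝒴]
    (hRays : ∀ y : 𝒴, MeasurableSet {v : 𝒴 | v < y} ∧ MeasurableSet {v : 𝒴 | v ≤ y})
    (μ : Measure Ω) [IsProbabilityMeasure μ]
    (U : Ω → 𝒰) (hU : Measurable U) (X : Ω → 𝒳) (hX : Measurable X)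
    (C : Ω → 𝒞) (hC : Measurable C)
    (f : 𝒳 → 𝒞 → 𝒰 → 𝒴) (hf : ∀ x c, Measurable (f x c))
    (c : 𝒞) (hc : 0 < μ {ω | C ω = c})
    (μc : Measure Ω) (hμc : μc = μ[|{ω | C ω = c}])
    (hexo : IndepFun U X μc)
    (hmono : ∃ S : Set 𝒰, MeasurableSet S ∧ μc {ω | U ω ∉ S} = 0 ∧
      ((∀ x, MonotoneOn (f x c) S) ∨ (∀ x, AntitoneOn (f x c) S)))
    (P : ℕ) (hP : 0 < P) (x : Fin (P + 1) → 𝒳) (ys : Fin P → 𝒴)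
    (hx : ∀ p : Fin (P + 1), 0 < μc {ω | X ω = x p})
    (ρ : 𝒴 → 𝒳 → ℝ)
    (hρ : ∀ (z : 𝒴) (x' : 𝒳), ρ z x' =
      (μc {ω | f (X ω) (C ω) (U ω) < z ∧ X ω = x'}).toReal
        / (μc {ω | X ω = x'}).toReal) :
    (μc {ω | ∀ p : Fin P,
          f (x p.castSucc) c (U ω) < ys p ∧ ys p ≤ f (x p.succ) c (U ω)}).toReal =
      max ((Finset.univ.inf' ⟨⟨0, hP⟩, Finset.mem_univ _⟩
              fun p : Fin P => ρ (ys p) (x p.castSucc))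
          - (Finset.univ.sup' ⟨⟨0, hP⟩, Finset.mem_univ _⟩
              fun p : Fin P => ρ (ys p) (x p.succ))) 0 :=
  identification_of_conditional_PNS_multi_hypothetical_general hRays μ U hU X C hC f hf c μc hμc
    hexo hmono P hP x ys hx ρ hρ
end

section
/- Identification of conditional PNS with multi-hypothetical terms and positive-probability evidence (Theorem 'Identification of conditional PNS with multi-hypothetical terms and evidence', case A): In the vector potential-outcomes model with covariates, let P ≥ 1, let x₀, x₁, …, x_P ∈ 𝒳 be treatments with μ_c {X = x_p} > 0 for every p, let y₁, …, y_P ∈ 𝒴 be thresholds, and let (y', x') be evidence values with μ_c {X = x'} > 0. Assume conditional exogeneity given C = c (U and X independent under μ_c), conditional almost-sure monotonicity of the structural function over U, and that the evidence has positive probability: μ_c {ω | Y ω = y' ∧ X ω = x'} > 0 (equivalently ρ(y';x',c) < ρᵒ(y';x',c)). Then μ_c.real {ω | (∀ p ∈ {1,…,P}, f x_{p−1} c (U ω) ≺ y_p ∧ y_p ≼ f x_p c (U ω)) ∧ Y ω = y' ∧ X ω = x'} / μ_c.real {ω | Y ω = y' ∧ X ω = x'} = max ((min (min over p of ρ(y_p;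 x_{p−1}, c)) (ρᵒ(y';x',c)) − max (max over p of ρ(y_p; x_p, c)) (ρ(y';x',c))) / (ρᵒ(y';x',c) − ρ(y';x',c))) 0. -/
open MeasureTheory ProbabilityTheory

lemma chain_exists_min' {α : Type*} : ∀ (n : ℕ) (A : Fin (n+1) → Set α),
    (∀ i j, A i ⊆ A j ∨ A j ⊆ A i) → ∃ j, ∀ i, A j ⊆ A i := by
  intro n
  induction n with
  | zero => exact fun A _ => ⟨0, fun i => by rw [Fin.eq_zero i]⟩
  | succ n ih =>
    intro A hA
    obtain ⟨j, hj⟩ := ih (fun i => A i.castSucc) (fun i j => hA _ _)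
    rcases hA j.castSucc (Fin.last _) with h | h
    · exact ⟨j.castSucc, fun i => Fin.lastCases h (fun p => hj p) i⟩
    · exact ⟨Fin.last _, fun i => Fin.lastCases subset_rfl (fun p => h.trans (hj p)) i⟩

lemma chain_exists_max' {α : Type*} (n : ℕ) (A : Fin (n+1) → Set α)
    (hA : ∀ i j, A i ⊆ A j ∨ A j ⊆ A i) : ∃ j, ∀ i, A i ⊆ A j := by
  obtain ⟨j, hj⟩ := chain_exists_min' n (fun i => (A i)ᶜ)
    (fun i j => (hA j i).imp Set.compl_subset_compl.mpr Set.compl_subset_compl.mpr)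
  exact ⟨j, fun i => Set.compl_subset_compl.mp (hj i)⟩

/-- Identification of conditional PNS with multi-hypothetical terms and positive-probability
evidence `(Y = y', X = x', C = c)` (case A of the theorem). -/
theorem identification_of_conditional_PNS_multi_hypothetical_with_evidence
    {Ω 𝒳 𝒞 𝒰 𝒴 : Type*} [MeasurableSpace Ω]
    [MeasurableSpace 𝒳] [MeasurableSingletonClass 𝒳]
    [MeasurableSpace 𝒞] [MeasurableSingletonClass 𝒞]
    [LinearOrder 𝒰] [MeasurableSpace 𝒰] [LinearOrder 𝒴] [MeasurableSpace 𝒴]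
    (hRays : ∀ y : 𝒴, MeasurableSet {v : 𝒴 | v < y} ∧ MeasurableSet {v : 𝒴 | v ≤ y})
    (μ : Measure Ω) [IsProbabilityMeasure μ]
    (U : Ω → 𝒰) (hU : Measurable U) (X : Ω → 𝒳) (hX : Measurable X)
    (C : Ω → 𝒞) (hC : Measurable C)
    (f : 𝒳 → 𝒞 → 𝒰 → 𝒴) (hf : ∀ x c, Measurable (f x c))
    (c : 𝒞) (hc : 0 < μ {ω | C ω = c})
    (μc : Measure Ω) (hμc : μc = μ[|{ω | C ω = c}])
    (hexo : IndepFun U X μc)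
    (hmono : ∃ S : Set 𝒰, MeasurableSet S ∧ μc {ω | U ω ∉ S} = 0 ∧
      ((∀ x, MonotoneOn (f x c) S) ∨ (∀ x, AntitoneOn (f x c) S)))
    (P : ℕ) (hP : 0 < P) (x : Fin (P + 1) → 𝒳) (ys : Fin P → 𝒴)
    (hx : ∀ p : Fin (P + 1), 0 < μc {ω | X ω = x p})
    (x' : 𝒳) (y' : 𝒴) (hx' : 0 < μc {ω | X ω = x'})
    (hev : 0 < μc {ω | f (X ω) (C ω) (U ω) = y' ∧ X ω = x'})
    (ρ : 𝒴 → 𝒳 → ℝ)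
    (hρ : ∀ (z : 𝒴) (x'' : 𝒳), ρ z x'' =
      (μc {ω | f (X ω) (C ω) (U ω) < z ∧ X ω = x''}).toReal
        / (μc {ω | X ω = x''}).toReal)
    (ρo : 𝒴 → 𝒳 → ℝ)
    (hρo : ∀ (z : 𝒴) (x'' : 𝒳), ρo z x'' =
      (μc {ω | f (X ω) (C ω) (U ω) ≤ z ∧ X ω = x''}).toReal
        / (μc {ω | X ω = x''}).toReal) :
    (μc {ω | (∀ p : Fin P,
          f (x p.castSucc) c (U ω) < ys p ∧ ys p ≤ f (x p.succ) c (U ω))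
          ∧ f (X ω) (C ω) (U ω) = y' ∧ X ω = x'}).toReal
        / (μc {ω | f (X ω) (C ω) (U ω) = y' ∧ X ω = x'}).toReal =
      max ((min (Finset.univ.inf' ⟨⟨0, hP⟩, Finset.mem_univ _⟩
                  fun p : Fin P => ρ (ys p) (x p.castSucc)) (ρo y' x')
            - max (Finset.univ.sup' ⟨⟨0, hP⟩, Finset.mem_univ _⟩
                  fun p : Fin P => ρ (ys p) (x p.succ)) (ρ y' x'))
          / (ρo y' x' - ρ y' x')) 0 := by
  classical
  obtain ⟨S, hSm, hS0, hmono⟩ := hmono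
  have hCmeas : MeasurableSet {ω | C ω = c} := hC (measurableSet_singleton c)
  have hprob : IsProbabilityMeasure μc := by
    rw [hμc]; exact cond_isProbabilityMeasure hc.ne'
  have hCae : ∀ᵐ ω ∂μc, C ω = c := by
    rw [ae_iff, hμc, cond_apply hCmeas]
    have h0 : {ω | C ω = c} ∩ {ω | ¬ C ω = c} = ∅ := by
      ext ω; simp only [Set.mem_inter_iff, Set.mem_setOf_eq, Set.mem_empty_iff_false, iff_false,
        not_and, not_not]
      exact fun h => h
    rw [h0, measure_empty, mul_zero]
  -- measurability of basic 𝒰-sets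
  have hlt : ∀ (z : 𝒳) (y : 𝒴), MeasurableSet {u | f z c u < y} := fun z y => hf z c (hRays y).1
  have hle : ∀ (z : 𝒳) (y : 𝒴), MeasurableSet {u | f z c u ≤ y} := fun z y => hf z c (hRays y).2
  have hsing : MeasurableSet {u | f x' c u = y'} := by
    have h : {u | f x' c u = y'} = {u | f x' c u ≤ y'} \ {u | f x' c u < y'} := by
      ext u
      simp only [Set.mem_setOf_eq, Set.mem_diff, not_lt]
      exact ⟨fun h => ⟨h.le, h.ge⟩, fun h => le_antisymm h.1 h.2⟩
    rw [h]; exact (hle x' y').diff (hlt x' y')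
  -- a.e. rewriting helper
  have hmeq : ∀ (s t : Set Ω), (∀ ω, C ω = c → (ω ∈ s ↔ ω ∈ t)) → μc s = μc t := by
    intro s t h
    apply measure_congr
    rw [Filter.eventuallyEq_set]
    filter_upwards [hCae] with ω hω using h ω hω
  -- independence helper
  have hind : ∀ (T : Set 𝒰), MeasurableSet T → ∀ z : 𝒳,
      μc (U ⁻¹' T ∩ {ω | X ω = z}) = μc (U ⁻¹' T) * μc {ω | X ω = z} :=
    fun T hT z => hexo.measure_inter_preimage_eq_mul T {z} hT (measurableSet_singleton z)
  -- removing S is measure-preserving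
  have hSnull : ∀ T : Set 𝒰, μc (U ⁻¹' (S ∩ T)) = μc (U ⁻¹' T) := by
    intro T
    refine le_antisymm (measure_mono (Set.preimage_mono Set.inter_subset_right)) ?_
    calc μc (U ⁻¹' T) ≤ μc (U ⁻¹' (S ∩ T) ∪ {ω | U ω ∉ S}) := by
          refine measure_mono fun ω hω => ?_
          by_cases h : U ω ∈ S
          · exact Or.inl ⟨h, hω⟩
          · exact Or.inr h
      _ ≤ μc (U ⁻¹' (S ∩ T)) + μc {ω | U ω ∉ S} := measure_union_le _ _
      _ = μc (U ⁻¹' (S ∩ T)) := by rw [hS0, add_zero]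
  -- toReal monotonicity
  have hmle : ∀ {s t : Set 𝒰}, s ⊆ t → (μc (U ⁻¹' s)).toReal ≤ (μc (U ⁻¹' t)).toReal :=
    fun h => ENNReal.toReal_mono (measure_ne_top _ _) (measure_mono (Set.preimage_mono h))
  -- evaluation of ρ and ρo
  have hρval : ∀ (z : 𝒴) (x'' : 𝒳), 0 < μc {ω | X ω = x''} →
      ρ z x'' = (μc (U ⁻¹' {u | f x'' c u < z})).toReal := by
    intro z x'' hpos
    have h1 : μc {ω | f (X ω) (C ω) (U ω) < z ∧ X ω = x''}
        = μc (U ⁻¹' {u | f x'' c u < z} ∩ {ω | X ω = x''}) := by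
      apply hmeq
      intro ω hω
      simp only [Set.mem_setOf_eq, Set.mem_inter_iff, Set.mem_preimage]
      constructor
      · rintro ⟨h1, h2⟩; exact ⟨by rw [← h2, ← hω]; exact h1, h2⟩
      · rintro ⟨h1, h2⟩; exact ⟨by rw [h2, hω]; exact h1, h2⟩
    rw [hρ, h1, hind _ (hlt x'' z) x'', ENNReal.toReal_mul, mul_div_assoc,
      div_self (ENNReal.toReal_ne_zero.mpr ⟨hpos.ne', measure_ne_top _ _⟩), mul_one]
  have hρoval : ∀ (z : 𝒴) (x'' : 𝒳), 0 < μc {ω | X ω = x''} →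
      ρo z x'' = (μc (U ⁻¹' {u | f x'' c u ≤ z})).toReal := by
    intro z x'' hpos
    have h1 : μc {ω | f (X ω) (C ω) (U ω) ≤ z ∧ X ω = x''}
        = μc (U ⁻¹' {u | f x'' c u ≤ z} ∩ {ω | X ω = x''}) := by
      apply hmeq
      intro ω hω
      simp only [Set.mem_setOf_eq, Set.mem_inter_iff, Set.mem_preimage]
      constructor
      · rintro ⟨h1, h2⟩; exact ⟨by rw [← h2, ← hω]; exact h1, h2⟩
      · rintro ⟨h1, h2⟩; exact ⟨by rw [h2, hω]; exact h1, h2⟩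
    rw [hρo, h1, hind _ (hle x'' z) x'', ENNReal.toReal_mul, mul_div_assoc,
      div_self (ENNReal.toReal_ne_zero.mpr ⟨hpos.ne', measure_ne_top _ _⟩), mul_one]
  -- the chain families
  set A : Fin P → Set 𝒰 := fun p => {u | u ∈ S ∧ f (x p.castSucc) c u < ys p} with hA
  set B : Fin P → Set 𝒰 := fun p => {u | u ∈ S ∧ f (x p.succ) c u < ys p} with hB
  set E : Set 𝒰 := {u | u ∈ S ∧ f x' c u ≤ y'} with hE
  set Fs : Set 𝒰 := {u | u ∈ S ∧ f x' c u < y'} with hFs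
  set A' : Fin (P+1) → Set 𝒰 := Fin.snoc A E with hA'
  set B' : Fin (P+1) → Set 𝒰 := Fin.snoc B Fs with hB'
  -- comparability of any two sets of the canonical form
  have hcomp : ∀ (x₁ x₂ : 𝒳) (Q₁ Q₂ : 𝒴 → Prop),
      (∀ a b, a ≤ b → Q₁ b → Q₁ a) → (∀ a b, a ≤ b → Q₂ b → Q₂ a) →
      {u | u ∈ S ∧ Q₁ (f x₁ c u)} ⊆ {u | u ∈ S ∧ Q₂ (f x₂ c u)} ∨
        {u | u ∈ S ∧ Q₂ (f x₂ c u)} ⊆ {u | u ∈ S ∧ Q₁ (f x₁ c u)} := by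
    intro x₁ x₂ Q₁ Q₂ hQ₁ hQ₂
    by_cases h : {u | u ∈ S ∧ Q₁ (f x₁ c u)} ⊆ {u | u ∈ S ∧ Q₂ (f x₂ c u)}
    · exact Or.inl h
    · right
      obtain ⟨u₀, hu₀, hu₀'⟩ := Set.not_subset.mp h
      intro v hv
      have hvS : v ∈ S := hv.1
      have hu₀S : u₀ ∈ S := hu₀.1
      refine ⟨hvS, ?_⟩
      rcases hmono with hm | hm
      · rcases le_or_gt u₀ v with h1 | h1
        · exact absurd ⟨hu₀S, hQ₂ _ _ (hm x₂ hu₀S hvS h1) hv.2⟩ hu₀'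
        · exact hQ₁ _ _ (hm x₁ hvS hu₀S h1.le) hu₀.2
      · rcases le_or_gt v u₀ with h1 | h1
        · exact absurd ⟨hu₀S, hQ₂ _ _ (hm x₂ hvS hu₀S h1) hv.2⟩ hu₀'
        · exact hQ₁ _ _ (hm x₁ hu₀S hvS h1.le) hu₀.2
  -- canonical forms of the combined families
  have hformA : ∀ i, ∃ (z : 𝒳) (Q : 𝒴 → Prop), (∀ a b, a ≤ b → Q b → Q a) ∧
      A' i = {u | u ∈ S ∧ Q (f z c u)} := by
    intro i
    refine Fin.lastCases ?_ ?_ i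
    · exact ⟨x', (· ≤ y'), fun a b hab h => hab.trans h,
        by simp only [hA', Fin.snoc_last, hE]⟩
    · intro p
      exact ⟨x p.castSucc, (· < ys p), fun a b hab h => lt_of_le_of_lt hab h,
        by simp only [hA', Fin.snoc_castSucc, hA]⟩
  have hformB : ∀ i, ∃ (z : 𝒳) (Q : 𝒴 → Prop), (∀ a b, a ≤ b → Q b → Q a) ∧
      B' i = {u | u ∈ S ∧ Q (f z c u)} := by
    intro i
    refine Fin.lastCases ?_ ?_ i
    · exact ⟨x', (· < y'), fun a b hab h => lt_of_le_of_lt hab h,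
        by simp only [hB', Fin.snoc_last, hFs]⟩
    · intro p
      exact ⟨x p.succ, (· < ys p), fun a b hab h => lt_of_le_of_lt hab h,
        by simp only [hB', Fin.snoc_castSucc, hB]⟩
  have hcompAA : ∀ i j, A' i ⊆ A' j ∨ A' j ⊆ A' i := by
    intro i j
    obtain ⟨z₁, Q₁, hQ₁, e₁⟩ := hformA i
    obtain ⟨z₂, Q₂, hQ₂, e₂⟩ := hformA j
    rw [e₁, e₂]; exact hcomp _ _ _ _ hQ₁ hQ₂
  have hcompBB : ∀ i j, B' i ⊆ B' j ∨ B' j ⊆ B' i := by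
    intro i j
    obtain ⟨z₁, Q₁, hQ₁, e₁⟩ := hformB i
    obtain ⟨z₂, Q₂, hQ₂, e₂⟩ := hformB j
    rw [e₁, e₂]; exact hcomp _ _ _ _ hQ₁ hQ₂
  have hcompAB : ∀ i j, A' i ⊆ B' j ∨ B' j ⊆ A' i := by
    intro i j
    obtain ⟨z₁, Q₁, hQ₁, e₁⟩ := hformA i
    obtain ⟨z₂, Q₂, hQ₂, e₂⟩ := hformB j
    rw [e₁, e₂]; exact hcomp _ _ _ _ hQ₁ hQ₂
  obtain ⟨jm, hjm⟩ := chain_exists_min' P A' hcompAA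
  obtain ⟨jM, hjM⟩ := chain_exists_max' P B' hcompBB
  -- measurability of the combined families
  have hA'm : ∀ i, MeasurableSet (A' i) := by
    intro i
    refine Fin.lastCases ?_ ?_ i
    · simp only [hA', Fin.snoc_last, hE]; exact hSm.inter (hle x' y')
    · intro p; simp only [hA', Fin.snoc_castSucc, hA]; exact hSm.inter (hlt _ _)
  have hB'm : ∀ i, MeasurableSet (B' i) := by
    intro i
    refine Fin.lastCases ?_ ?_ i
    · simp only [hB', Fin.snoc_last, hFs]; exact hSm.inter (hlt x' y')
    · intro p; simp only [hB', Fin.snoc_castSucc, hB]; exact hSm.inter (hlt _ _)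
  -- the hypothetical-event set
  set G : Set 𝒰 := {u | (∀ p : Fin P, f (x p.castSucc) c u < ys p ∧ ys p ≤ f (x p.succ) c u)
      ∧ f x' c u = y'} with hGdef
  have hGm : MeasurableSet G := by
    have h : G = (⋂ p : Fin P,
        ({u | f (x p.castSucc) c u < ys p} ∩ {u | f (x p.succ) c u < ys p}ᶜ))
        ∩ {u | f x' c u = y'} := by
      ext u
      simp only [hGdef, Set.mem_setOf_eq, Set.mem_inter_iff, Set.mem_iInter,
        Set.mem_compl_iff, not_lt]
    rw [h]
    exact (MeasurableSet.iInter (fun p => (hlt _ _).inter (hlt _ _).compl)).inter hsing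
  have hSG : S ∩ G = A' jm \ B' jM := by
    have h1 : S ∩ G = ⋂ i, (A' i \ B' i) := by
      ext u
      simp only [Set.mem_inter_iff, hGdef, Set.mem_setOf_eq, Set.mem_iInter, Set.mem_diff]
      constructor
      · rintro ⟨huS, hall, heq⟩ i
        refine Fin.lastCases ?_ ?_ i
        · constructor
          · simp only [hA', Fin.snoc_last, hE, Set.mem_setOf_eq]; exact ⟨huS, heq.le⟩
          · simp only [hB', Fin.snoc_last, hFs, Set.mem_setOf_eq]
            exact fun h => h.2.ne heq
        · intro p
          constructor
          · simp only [hA', Fin.snoc_castSucc, hA, Set.mem_setOf_eq]; exact ⟨huS, (hall p).1⟩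
          · simp only [hB', Fin.snoc_castSucc, hB, Set.mem_setOf_eq]
            exact fun h => absurd h.2 (not_lt.mpr (hall p).2)
      · intro h
        have hlast := h (Fin.last P)
        simp only [hA', hB', Fin.snoc_last, hE, hFs, Set.mem_setOf_eq] at hlast
        have huS : u ∈ S := hlast.1.1
        refine ⟨huS, fun p => ?_, ?_⟩
        · have hp := h p.castSucc
          simp only [hA', hB', Fin.snoc_castSucc, hA, hB, Set.mem_setOf_eq] at hp
          exact ⟨hp.1.2, le_of_not_gt fun hltp => hp.2 ⟨huS, hltp⟩⟩
        · exact le_antisymm hlast.1.2 (le_of_not_gt fun hltp => hlast.2 ⟨huS, hltp⟩)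
    rw [h1]
    ext u
    constructor
    · intro hu; rw [Set.mem_iInter] at hu; exact ⟨(hu jm).1, (hu jM).2⟩
    · intro hu; rw [Set.mem_iInter]; exact fun i => ⟨hjm i hu.1, fun hB => hu.2 (hjM i hB)⟩
  -- evidence set has form E \ Fs (modulo S)
  have hEq : S ∩ {u | f x' c u = y'} = E \ Fs := by
    ext u
    simp only [Set.mem_inter_iff, Set.mem_setOf_eq, Set.mem_diff, hE, hFs]
    constructor
    · rintro ⟨hS, heq⟩; exact ⟨⟨hS, heq.le⟩, fun h => h.2.ne heq⟩
    · rintro ⟨⟨hS, hle'⟩, h⟩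
      exact ⟨hS, le_antisymm hle' (le_of_not_gt fun hltp => h ⟨hS, hltp⟩)⟩
  -- the evidence measure
  have hed : μc {ω | f (X ω) (C ω) (U ω) = y' ∧ X ω = x'}
      = μc (U ⁻¹' (E \ Fs)) * μc {ω | X ω = x'} := by
    have h1 : μc {ω | f (X ω) (C ω) (U ω) = y' ∧ X ω = x'}
        = μc (U ⁻¹' {u | f x' c u = y'} ∩ {ω | X ω = x'}) := by
      apply hmeq
      intro ω hω
      simp only [Set.mem_setOf_eq, Set.mem_inter_iff, Set.mem_preimage]
      constructor
      · rintro ⟨h1, h2⟩; exact ⟨by rw [← h2, ← hω]; exact h1, h2⟩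
      · rintro ⟨h1, h2⟩; exact ⟨by rw [h2, hω]; exact h1, h2⟩
    rw [h1, hind _ hsing x']
    congr 1
    rw [← hEq]
    exact (hSnull _).symm
  -- numerator measure
  have hnum : μc {ω | (∀ p : Fin P,
        f (x p.castSucc) c (U ω) < ys p ∧ ys p ≤ f (x p.succ) c (U ω))
        ∧ f (X ω) (C ω) (U ω) = y' ∧ X ω = x'}
      = μc (U ⁻¹' (A' jm \ B' jM)) * μc {ω | X ω = x'} := by
    have h1 : μc {ω | (∀ p : Fin P,
          f (x p.castSucc) c (U ω) < ys p ∧ ys p ≤ f (x p.succ) c (U ω))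
          ∧ f (X ω) (C ω) (U ω) = y' ∧ X ω = x'}
        = μc (U ⁻¹' G ∩ {ω | X ω = x'}) := by
      apply hmeq
      intro ω hω
      simp only [Set.mem_setOf_eq, Set.mem_inter_iff, Set.mem_preimage, hGdef]
      constructor
      · rintro ⟨h1, h2, h3⟩
        exact ⟨⟨h1, by rw [← h3, ← hω]; exact h2⟩, h3⟩
      · rintro ⟨⟨h1, h2⟩, h3⟩
        exact ⟨h1, by rw [h3, hω]; exact h2, h3⟩
    rw [h1, hind _ hGm x']
    congr 1
    rw [← hSG]
    exact (hSnull _).symm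
  -- values of ρ, ρo in terms of the families
  have hAeq : ∀ p : Fin P, A' p.castSucc = S ∩ {u | f (x p.castSucc) c u < ys p} := by
    intro p
    simp only [hA', Fin.snoc_castSucc, hA]
    ext u
    simp only [Set.mem_inter_iff, Set.mem_setOf_eq]
  have hBeq : ∀ p : Fin P, B' p.castSucc = S ∩ {u | f (x p.succ) c u < ys p} := by
    intro p
    simp only [hB', Fin.snoc_castSucc, hB]
    ext u
    simp only [Set.mem_inter_iff, Set.mem_setOf_eq]
  have hEeq : A' (Fin.last P) = S ∩ {u | f x' c u ≤ y'} := by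
    simp only [hA', Fin.snoc_last, hE]
    ext u
    simp only [Set.mem_inter_iff, Set.mem_setOf_eq]
  have hFeq : B' (Fin.last P) = S ∩ {u | f x' c u < y'} := by
    simp only [hB', Fin.snoc_last, hFs]
    ext u
    simp only [Set.mem_inter_iff, Set.mem_setOf_eq]
  have hAval : ∀ p : Fin P, ρ (ys p) (x p.castSucc) = (μc (U ⁻¹' (A' p.castSucc))).toReal := by
    intro p
    rw [hρval _ _ (hx p.castSucc), ← hSnull {u | f (x p.castSucc) c u < ys p}, hAeq p]
  have hBval : ∀ p : Fin P, ρ (ys p) (x p.succ) = (μc (U ⁻¹' (B' p.castSucc))).toReal := by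
    intro p
    rw [hρval _ _ (hx p.succ), ← hSnull {u | f (x p.succ) c u < ys p}, hBeq p]
  have hEval : ρo y' x' = (μc (U ⁻¹' (A' (Fin.last P)))).toReal := by
    rw [hρoval _ _ hx', ← hSnull {u | f x' c u ≤ y'}, hEeq]
  have hFval : ρ y' x' = (μc (U ⁻¹' (B' (Fin.last P)))).toReal := by
    rw [hρval _ _ hx', ← hSnull {u | f x' c u < y'}, hFeq]
  -- min/max identification
  have hminval : min (Finset.univ.inf' ⟨⟨0, hP⟩, Finset.mem_univ _⟩
        fun p : Fin P => ρ (ys p) (x p.castSucc)) (ρo y' x')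
      = (μc (U ⁻¹' (A' jm))).toReal := by
    have hub : ∀ i, (μc (U ⁻¹' (A' jm))).toReal ≤ (μc (U ⁻¹' (A' i))).toReal :=
      fun i => hmle (hjm i)
    refine le_antisymm ?_ ?_
    · rcases Fin.eq_castSucc_or_eq_last jm with ⟨p, hp⟩ | hp
      · rw [hp]
        exact (min_le_left _ _).trans
          ((Finset.inf'_le _ (Finset.mem_univ p)).trans_eq (hAval p))
      · rw [hp]
        exact (min_le_right _ _).trans_eq hEval
    · refine le_min (Finset.le_inf' _ _ fun p _ => ?_) ?_
      · rw [hAval p]; exact hub p.castSucc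
      · rw [hEval]; exact hub (Fin.last P)
  have hmaxval : max (Finset.univ.sup' ⟨⟨0, hP⟩, Finset.mem_univ _⟩
        fun p : Fin P => ρ (ys p) (x p.succ)) (ρ y' x')
      = (μc (U ⁻¹' (B' jM))).toReal := by
    have hub : ∀ i, (μc (U ⁻¹' (B' i))).toReal ≤ (μc (U ⁻¹' (B' jM))).toReal :=
      fun i => hmle (hjM i)
    refine le_antisymm ?_ ?_
    · refine max_le (Finset.sup'_le _ _ fun p _ => ?_) ?_
      · rw [hBval p]; exact hub p.castSucc
      · rw [hFval]; exact hub (Fin.last P)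
    · rcases Fin.eq_castSucc_or_eq_last jM with ⟨p, hp⟩ | hp
      · rw [hp, ← hBval p]
        exact (Finset.le_sup' (fun p : Fin P => ρ (ys p) (x p.succ)) (Finset.mem_univ p)).trans
          (le_max_left _ _)
      · rw [hp, ← hFval]
        exact le_max_right _ _
  -- the denominator deltas
  have hFEsub : Fs ⊆ E := by
    intro u hu
    rw [hFs, Set.mem_setOf_eq] at hu
    rw [hE, Set.mem_setOf_eq]
    exact ⟨hu.1, hu.2.le⟩
  have hFsmeas : MeasurableSet Fs := by
    rw [hFs]; exact hSm.inter (hlt x' y')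
  have hdE : ρo y' x' - ρ y' x' = (μc (U ⁻¹' (E \ Fs))).toReal := by
    have h1 : A' (Fin.last P) = E := by simp only [hA', Fin.snoc_last]
    have h2 : B' (Fin.last P) = Fs := by simp only [hB', Fin.snoc_last]
    rw [hEval, hFval, h1, h2, Set.preimage_diff,
      measure_diff (Set.preimage_mono hFEsub) (hU hFsmeas).nullMeasurableSet
        (measure_ne_top _ _),
      ENNReal.toReal_sub_of_le (measure_mono (Set.preimage_mono hFEsub)) (measure_ne_top _ _)]
  have hdne : μc (U ⁻¹' (E \ Fs)) ≠ 0 := by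
    intro h
    rw [hed, h, zero_mul] at hev
    exact lt_irrefl _ hev
  have hdpos : 0 < (μc (U ⁻¹' (E \ Fs))).toReal :=
    ENNReal.toReal_pos hdne (measure_ne_top _ _)
  -- the numerator value
  have hN : (μc (U ⁻¹' (A' jm \ B' jM))).toReal
      = max ((μc (U ⁻¹' (A' jm))).toReal - (μc (U ⁻¹' (B' jM))).toReal) 0 := by
    rcases hcompAB jm jM with h | h
    · have he : A' jm \ B' jM = ∅ := Set.diff_eq_empty.mpr h
      rw [he, Set.preimage_empty, measure_empty, ENNReal.toReal_zero,
        max_eq_right (sub_nonpos.mpr (hmle h))]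
    · rw [Set.preimage_diff,
        measure_diff (Set.preimage_mono h) (hU (hB'm jM)).nullMeasurableSet (measure_ne_top _ _),
        ENNReal.toReal_sub_of_le (measure_mono (Set.preimage_mono h)) (measure_ne_top _ _),
        max_eq_left (sub_nonneg.mpr (hmle h))]
  -- final assembly
  have hxR : (μc {ω | X ω = x'}).toReal ≠ 0 :=
    ENNReal.toReal_ne_zero.mpr ⟨hx'.ne', measure_ne_top _ _⟩
  rw [hnum, hed, hminval, hmaxval, hdE, ENNReal.toReal_mul, ENNReal.toReal_mul,
    mul_div_mul_right _ _ hxR, hN, ← max_div_div_right hdpos.le, zero_div]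
end

section
/- Pointwise form of the Corollary on conditional PNS with multi-hypothetical terms and evidence under strict monotonicity: In the strict-monotonicity evidence setup, let P ≥ 1, let x₀, x₁, …, x_P ∈ 𝒳 be treatments and y₁, …, y_P ∈ 𝒴 be thresholds. For every latent value u₀ ∈ ℝ and every treatment x' ∈ 𝒳, writing y' := f x' u₀ (so that u₀ is compatible with the evidence (Y = y', X = x', C = c)), the joint counterfactual event holds exactly when the CDF condition holds: (∀ p ∈ {1,…,P}, f x_{p−1} u₀ ≺ y_p ∧ y_p ≼ f x_p u₀) ↔ (∀ p ∈ {1,…,P}, ρ(y_p; x_p) ≤ ρ(y';x') ∧ ρ(y';x') < ρ(y_p; x_{p−1})). In other words, given such evidence the conditional PNS with multi-hypothetical terms equals the indicator 𝕀(max over p of ρ(y_p;x_p,c) ≤ ρ(y';x',c) < min over p of ρ(y_p;x_{p−1},c)). -/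
/-!
Under strict monotonicity the evidence set `{u | f x' u < f x' u₀}` is the half-line `Iio u₀`
(resp. `Ioi u₀`). For continuous strictly monotone `g`, if `g u₀ < y` then the open set
`{u | g u < y}` contains this half-line and also a one-sided neighbourhood of `u₀`, which has
positive `ν`-measure by full support; otherwise it is contained in the half-line. So
`f x u₀ < y ↔ ρ(y';x') < ρ(y;x)`, and negating gives `y ≤ f x u₀ ↔ ρ(y;x) ≤ ρ(y';x')`.
-/

open MeasureTheory Set

namespace MeasureTheory

variable {α : Type*} [LinearOrder α] [TopologicalSpace α] [OrderTopology α] [MeasurableSpace α]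
  {μ : Measure α}

theorem Measure.isOpenPosMeasure_of_forall_Ioo_pos [Nontrivial α]
    (h : ∀ a b : α, a < b → 0 < μ (Ioo a b)) : μ.IsOpenPosMeasure :=
  ⟨fun _U hU hne ↦
    let ⟨a, b, hab, hsub⟩ := hU.exists_Ioo_subset hne
    ((h a b hab).trans_le (measure_mono hsub)).ne'⟩

variable [OpensMeasurableSpace α] [DenselyOrdered α] [IsFiniteMeasure μ] [μ.IsOpenPosMeasure]

theorem measure_Iio_lt_of_isOpen [NoMaxOrder α] {a : α} {t : Set α} (ht : IsOpen t)
    (ha : a ∈ t) (hsub : Iio a ⊆ t) : μ (Iio a) < μ t := by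
  obtain ⟨b, hab, hb⟩ := exists_Ico_subset_of_mem_nhds (ht.mem_nhds ha) (exists_gt a)
  have hpos : 0 < μ (t \ Iio a) :=
    (isOpen_Ioo.measure_pos μ (nonempty_Ioo.2 hab)).trans_le <|
      measure_mono fun u hu ↦ ⟨hb (Ioo_subset_Ico_self hu), not_lt.2 hu.1.le⟩
  calc μ (Iio a) < μ (Iio a) + μ (t \ Iio a) :=
        ENNReal.lt_add_right (measure_ne_top μ _) hpos.ne'
    _ = μ t := by rw [measure_add_sdiff measurableSet_Iio.nullMeasurableSet, union_eq_right.2 hsub]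

theorem measure_Ioi_lt_of_isOpen [NoMinOrder α] {a : α} {t : Set α} (ht : IsOpen t)
    (ha : a ∈ t) (hsub : Ioi a ⊆ t) : μ (Ioi a) < μ t :=
  have : @IsFiniteMeasure αᵒᵈ _ μ := ‹IsFiniteMeasure μ›
  have : @Measure.IsOpenPosMeasure αᵒᵈ _ _ μ := ‹μ.IsOpenPosMeasure›
  measure_Iio_lt_of_isOpen (α := αᵒᵈ) (μ := μ) (a := OrderDual.toDual a) ht ha hsub

end MeasureTheory

section

variable {α : Type*} [LinearOrder α] [TopologicalSpace α] [OrderTopology α] [DenselyOrdered α]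
  [MeasurableSpace α] [OpensMeasurableSpace α] {μ : Measure α} [IsFiniteMeasure μ]
  [μ.IsOpenPosMeasure] {𝒴 : Type*} [LinearOrder 𝒴] [TopologicalSpace 𝒴] [OrderClosedTopology 𝒴]
  {g : α → 𝒴}

theorem StrictMono.lt_iff_measure_Iio_lt [NoMaxOrder α] (hg : StrictMono g) (hc : Continuous g)
    (a : α) (y : 𝒴) : g a < y ↔ μ (Iio a) < μ {u | g u < y} := by
  refine ⟨fun h ↦ measure_Iio_lt_of_isOpen (isOpen_lt hc continuous_const) h
    fun u hu ↦ (hg hu).trans h, fun h ↦ ?_⟩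
  contrapose! h
  exact measure_mono fun u hu ↦ hg.lt_iff_lt.1 (hu.trans_le h)

theorem StrictAnti.lt_iff_measure_Ioi_lt [NoMinOrder α] (hg : StrictAnti g) (hc : Continuous g)
    (a : α) (y : 𝒴) : g a < y ↔ μ (Ioi a) < μ {u | g u < y} :=
  have : @IsFiniteMeasure αᵒᵈ _ μ := ‹IsFiniteMeasure μ›
  have : @Measure.IsOpenPosMeasure αᵒᵈ _ _ μ := ‹μ.IsOpenPosMeasure›
  hg.dual_left.lt_iff_measure_Iio_lt (α := αᵒᵈ) (μ := μ) hc (OrderDual.toDual a) y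

end

theorem pointwise_conditional_PNS_multi_hypothetical_with_evidence_strict_monotonicity_general
    {𝒳 𝒴 : Type*} [LinearOrder 𝒴] [TopologicalSpace 𝒴] [OrderTopology 𝒴]
    (ν : Measure ℝ) [IsProbabilityMeasure ν]
    (hsupp : ∀ a b : ℝ, a < b → 0 < ν (Set.Ioo a b))
    (f : 𝒳 → ℝ → 𝒴) (hcont : ∀ x, Continuous (f x))
    (hstrict : (∀ x, StrictMono (f x)) ∨ (∀ x, StrictAnti (f x)))
    (P : ℕ) (x : Fin (P + 1) → 𝒳) (ys : Fin P → 𝒴)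
    (u₀ : ℝ) (x' : 𝒳) :
    (∀ p : Fin P, f (x p.castSucc) u₀ < ys p ∧ ys p ≤ f (x p.succ) u₀) ↔
      (∀ p : Fin P,
        ν {u | f (x p.succ) u < ys p} ≤ ν {u | f x' u < f x' u₀} ∧
          ν {u | f x' u < f x' u₀} < ν {u | f (x p.castSucc) u < ys p}) := by
  have := Measure.isOpenPosMeasure_of_forall_Ioo_pos hsupp
  have lt_iff : ∀ z y, f z u₀ < y ↔ ν {u | f x' u < f x' u₀} < ν {u | f z u < y} := by
    rcases hstrict with hm | hm
    · rw [show {u | f x' u < f x' u₀} = Iio u₀ from Set.ext fun u ↦ (hm x').lt_iff_lt]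
      exact fun z ↦ (hm z).lt_iff_measure_Iio_lt (hcont z) u₀
    · rw [show {u | f x' u < f x' u₀} = Ioi u₀ from Set.ext fun u ↦ (hm x').lt_iff_gt]
      exact fun z ↦ (hm z).lt_iff_measure_Ioi_lt (hcont z) u₀
  refine forall_congr' fun p ↦ ?_
  rw [and_comm, ← not_lt, ← not_lt (b := ν _), lt_iff, lt_iff]

/-- Pointwise form of the corollary on conditional PNS with multi-hypothetical terms and
evidence under strict monotonicity: for a latent value `u₀` compatible with the evidence
`(Y = y', X = x', C = c)` (i.e. `y' = f x' u₀`), the joint counterfactual event holds iff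
`ρ(y_p;x_p) ≤ ρ(y';x') < ρ(y_p;x_{p−1})` for every `p`. -/
theorem pointwise_conditional_PNS_multi_hypothetical_with_evidence_strict_monotonicity
    {𝒳 𝒴 : Type*} [LinearOrder 𝒴] [TopologicalSpace 𝒴] [OrderTopology 𝒴]
    (ν : Measure ℝ) [IsProbabilityMeasure ν]
    (hsupp : ∀ a b : ℝ, a < b → 0 < ν (Set.Ioo a b))
    (f : 𝒳 → ℝ → 𝒴) (hcont : ∀ x, Continuous (f x))
    (hstrict : (∀ x, StrictMono (f x)) ∨ (∀ x, StrictAnti (f x)))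
    (P : ℕ) (hP : 0 < P) (x : Fin (P + 1) → 𝒳) (ys : Fin P → 𝒴)
    (u₀ : ℝ) (x' : 𝒳) :
    (∀ p : Fin P, f (x p.castSucc) u₀ < ys p ∧ ys p ≤ f (x p.succ) u₀) ↔
      (∀ p : Fin P,
        ν {u | f (x p.succ) u < ys p} ≤ ν {u | f x' u < f x' u₀} ∧
          ν {u | f x' u < f x' u₀} < ν {u | f (x p.castSucc) u < ys p}) :=
  pointwise_conditional_PNS_multi_hypothetical_with_evidence_strict_monotonicity_general ν hsupp f
    hcont hstrict P x ys u₀ x'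
end
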